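/- arXiv:2407.04935 — 10 statements merged into one kernel-verified Lean document; each statement's English description precedes it below -/
import Mathlib

section
/- Let n ∈ ℕ and let p(x) = c₀ + c₁x + ⋯ + cₙxⁿ be a real polynomial with coefficients c₀,…,cₙ not all zero. Let I ⊂ ℝ be a bounded interval, let 0 < δ ≤ 1, and let I_δ ⊆ I be a subinterval with |I_δ| = δ|I| > 0. Then ‖p‖_I ≤ (n+1)·(nⁿ/δⁿ)·‖p‖_{I_δ}. -/
/-!
Interpolate `p` at the `n + 1` equally spaced nodes of `[a', b']`. Since `deg p ≤ n`, `p` equals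
its Lagrange interpolant, so `|p x|` is at most `n + 1` times `max |p(node)| ≤ ‖p‖_{[a',b']}`
times the largest Lagrange basis value at `x`. Each basis polynomial is a product of `n` factors
`(x - v j) / (v i - v j)`, and `|x - v j| ≤ |I| = |I_δ| / δ` while `|v i - v j| ≥ |I_δ| / n`,
so every factor is at most `n / δ`.
-/

open Set Polynomial

namespace Lagrange

variable {F ι : Type*} [Field F] [LinearOrder F] [IsStrictOrderedRing F] [DecidableEq ι]
  {s : Finset ι} {v : ι → F}

theorem abs_eval_basisDivisor (x y z : F) :
    |(basisDivisor x y).eval z| = |z - y| / |x - y| := by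
  simp only [basisDivisor, eval_mul, eval_C, eval_sub, eval_X, abs_mul, abs_inv, div_eq_inv_mul]

theorem abs_eval_basis_le (hv : InjOn v s) {i : ι} (hi : i ∈ s) {x K : F}
    (hK : ∀ j ∈ s, j ≠ i → |x - v j| ≤ K * |v i - v j|) :
    |(Lagrange.basis s v i).eval x| ≤ K ^ (s.card - 1) := by
  rw [Lagrange.basis, eval_prod, Finset.abs_prod, ← Finset.card_erase_of_mem hi,
    ← Finset.prod_const]
  refine Finset.prod_le_prod (fun _ _ => abs_nonneg _) fun j hj => ?_
  obtain ⟨hji, hj⟩ := Finset.mem_erase.mp hj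
  have hvij : 0 < |v i - v j| := abs_pos.mpr (sub_ne_zero.mpr fun h => hji (hv hj hi h.symm))
  rw [abs_eval_basisDivisor, div_le_iff₀ hvij]
  exact hK j hj hji

theorem abs_eval_le_sum_of_degree_lt (hv : InjOn v s) {P : F[X]} (hP : P.degree < s.card)
    (x : F) : |P.eval x| ≤ ∑ i ∈ s, |P.eval (v i)| * |(Lagrange.basis s v i).eval x| := by
  conv_lhs => rw [eq_interpolate hv hP, interpolate_apply, eval_finsetSum]
  simpa only [eval_mul, eval_C, abs_mul] using
    Finset.abs_sum_le_sum_abs (fun i => P.eval (v i) * (Lagrange.basis s v i).eval x) s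

theorem abs_eval_le_of_degree_lt (hv : InjOn v s) {P : F[X]} (hP : P.degree < s.card)
    {x M K : F} (hM : ∀ i ∈ s, |P.eval (v i)| ≤ M)
    (hK : ∀ i ∈ s, ∀ j ∈ s, j ≠ i → |x - v j| ≤ K * |v i - v j|) :
    |P.eval x| ≤ s.card * K ^ (s.card - 1) * M :=
  calc |P.eval x|
      ≤ ∑ i ∈ s, |P.eval (v i)| * |(Lagrange.basis s v i).eval x| :=
        abs_eval_le_sum_of_degree_lt hv hP x
    _ ≤ ∑ _i ∈ s, M * K ^ (s.card - 1) :=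
        Finset.sum_le_sum fun i hi => mul_le_mul (hM i hi) (abs_eval_basis_le hv hi (hK i hi))
          (abs_nonneg _) ((abs_nonneg _).trans (hM i hi))
    _ = s.card * K ^ (s.card - 1) * M := by rw [Finset.sum_const, nsmul_eq_mul]; ring

end Lagrange

/-- With `n = 0` the division is by zero and every node is `a`. -/
noncomputable def equispaced (a b : ℝ) (n j : ℕ) : ℝ :=
  a + j * (b - a) / n

theorem equispaced_mem_Icc {a b : ℝ} (hab : a ≤ b) {n j : ℕ} (hj : j ≤ n) :
    equispaced a b n j ∈ Icc a b := by
  have hba : 0 ≤ b - a := sub_nonneg.mpr hab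
  have hjn : (j : ℝ) * (b - a) / n ≤ b - a := by
    rcases n.eq_zero_or_pos with rfl | hn
    · simpa using hba
    · rw [div_le_iff₀ (by exact_mod_cast hn), mul_comm (b - a)]
      exact mul_le_mul_of_nonneg_right (by exact_mod_cast hj) hba
  exact ⟨le_add_of_nonneg_right (by positivity), by unfold equispaced; linarith⟩

theorem sub_le_mul_abs_equispaced_sub (a b : ℝ) {n i j : ℕ} (hi : i ≤ n) (hj : j ≤ n)
    (hij : i ≠ j) : b - a ≤ n * |equispaced a b n i - equispaced a b n j| := by
  have hn : (n : ℝ) ≠ 0 := by exact_mod_cast (show n ≠ 0 by omega)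
  have hdiff : n * (equispaced a b n i - equispaced a b n j) = ((i : ℝ) - j) * (b - a) := by
    unfold equispaced
    field_simp
    ring
  have hone : (1 : ℝ) ≤ |(i : ℝ) - j| := by
    exact_mod_cast Int.one_le_abs (show (i : ℤ) - j ≠ 0 by omega)
  rw [← abs_of_nonneg (Nat.cast_nonneg (α := ℝ) n), ← abs_mul, hdiff, abs_mul]
  nlinarith [le_abs_self (b - a), abs_nonneg (b - a)]

theorem polynomial_delta_good_general
    (n : ℕ) (c : Fin (n + 1) → ℝ)
    (a b a' b' : ℝ) (δ : ℝ) (hδ0 : 0 < δ)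
    (hsub1 : a ≤ a') (hsub2 : b' ≤ b)
    (hlen : b' - a' = δ * (b - a)) (hpos : 0 < b' - a')
    (p : ℝ → ℝ) (hp : ∀ x, p x = ∑ i : Fin (n + 1), c i * x ^ (i : ℕ)) :
    ∀ x ∈ Icc a b,
      |p x| ≤ (n + 1) * ((n : ℝ) ^ n / δ ^ n) *
        sSup ((fun t => |p t|) '' Icc a' b') := by
  intro x hx
  set P : ℝ[X] := ∑ i : Fin (n + 1), C (c i) * X ^ (i : ℕ)
  have hPp : ∀ t, P.eval t = p t := by simp [P, eval_finsetSum, hp]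
  set s := Finset.range (n + 1)
  set v := equispaced a' b' n
  have hnodes : ∀ j ∈ s, v j ∈ Icc a' b' := fun j hj =>
    equispaced_mem_Icc (sub_pos.mp hpos).le (Finset.mem_range_succ_iff.mp hj)
  have hsep : ∀ i ∈ s, ∀ j ∈ s, j ≠ i → b' - a' ≤ n * |v i - v j| := fun i hi j hj hji =>
    sub_le_mul_abs_equispaced_sub a' b' (Finset.mem_range_succ_iff.mp hi)
      (Finset.mem_range_succ_iff.mp hj) hji.symm
  have hv : InjOn v s := fun i hi j hj hvij => by
    by_contra hij
    have := hsep i hi j hj (Ne.symm hij)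
    rw [hvij, sub_self, abs_zero, mul_zero] at this
    linarith
  have hbdd : BddAbove ((fun t => |p t|) '' Icc a' b') :=
    (isCompact_Icc.image (by simp_rw [← hPp]; fun_prop)).bddAbove
  have hM : ∀ i ∈ s, |P.eval (v i)| ≤ sSup ((fun t => |p t|) '' Icc a' b') := fun i hi =>
    hPp (v i) ▸ le_csSup hbdd (mem_image_of_mem _ (hnodes i hi))
  have hK : ∀ i ∈ s, ∀ j ∈ s, j ≠ i → |x - v j| ≤ n / δ * |v i - v j| := by
    intro i hi j hj hji
    have hxv : |x - v j| ≤ b - a := abs_sub_le_iff.mpr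
      ⟨by linarith [hx.2, (hnodes j hj).1], by linarith [hx.1, (hnodes j hj).2]⟩
    rw [div_mul_eq_mul_div, le_div_iff₀ hδ0]
    nlinarith [hsep i hi j hj hji]
  have hbound := Lagrange.abs_eval_le_of_degree_lt hv (by simpa [s] using degree_sum_fin_lt c) hM hK
  rwa [hPp, Finset.card_range, add_tsub_cancel_right, div_pow, Nat.cast_succ] at hbound

/-- Let `p(x) = c₀ + c₁x + ⋯ + cₙxⁿ` be a real polynomial with coefficients
not all zero, `I = [a,b]` a bounded interval, `0 < δ ≤ 1`, and `I_δ = [a',b'] ⊆ I` a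
subinterval with `|I_δ| = δ·|I| > 0`. Then `‖p‖_I ≤ (n+1)·(nⁿ/δⁿ)·‖p‖_{I_δ}`, where
`‖f‖_J = sup_{t ∈ J} |f(t)|`. -/
theorem polynomial_delta_good
    (n : ℕ) (c : Fin (n + 1) → ℝ) (hc : c ≠ 0)
    (a b a' b' : ℝ) (δ : ℝ) (hδ0 : 0 < δ) (hδ1 : δ ≤ 1)
    (hsub1 : a ≤ a') (hsub2 : b' ≤ b)
    (hlen : b' - a' = δ * (b - a)) (hpos : 0 < b' - a')
    (p : ℝ → ℝ) (hp : ∀ x, p x = ∑ i : Fin (n + 1), c i * x ^ (i : ℕ)) :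
    ∀ x ∈ Icc a b,
      |p x| ≤ (n + 1) * ((n : ℝ) ^ n / δ ^ n) *
        sSup ((fun t => |p t|) '' Icc a' b') :=
  polynomial_delta_good_general n c a b a' b' δ hδ0 hsub1 hsub2 hlen hpos p hp
end

section
/- Let I ⊂ ℝ be a bounded interval with |I| > 0 and let f : I → ℝ be continuous with ‖f‖_I > 0. Suppose there exist m ≥ 1 and r > 0 such that for every subinterval I′ ⊆ I with |I′| > 0 one has ‖f‖_I ≤ m·(|I|/|I′|)^r·‖f‖_{I′}, and suppose K ≥ 1 is an integer such that for every ε > 0 the set {t ∈ I : |f(t)| ≤ ε} has at most K connected components. Then for every ε > 0, the Lebesgue measure |{t ∈ I : |f(t)| ≤ ε}| ≤ m^{1/r} · K · (ε/‖f‖_I)^{1/r} · |I|. -/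
open Set MeasureTheory

/-!
Each connected component of the sublevel set `{t ∈ [a, b] | |f t| ≤ ε}` is a closed interval
`[a', b']` on which `sup |f| ≤ ε`, so the Remez-type inequality gives
`‖f‖_{[a,b]} ≤ m ((b - a) / (b' - a'))^r ε`, i.e. `b' - a' ≤ (m ε / ‖f‖)^{1/r} (b - a)`.
There are at most `K` components, and the measure is subadditive.
-/

theorem IsClosed.isClosed_connectedComponentIn {X : Type*} [TopologicalSpace X] {F : Set X}
    (hF : IsClosed F) (x : X) : IsClosed (connectedComponentIn F x) := by
  by_cases hx : x ∈ F
  · refine isClosed_of_closure_subset <|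
      isPreconnected_connectedComponentIn.closure.subset_connectedComponentIn
        (subset_closure (mem_connectedComponentIn hx)) ?_
    exact hF.closure_subset_iff.mpr (connectedComponentIn_subset F x)
  · rw [connectedComponentIn_eq_empty hx]
    exact isClosed_empty

theorem IsCompact.exists_connectedComponentIn_eq_Icc {α : Type*}
    [ConditionallyCompleteLinearOrder α] [TopologicalSpace α] [OrderTopology α] {S : Set α}
    (hS : IsCompact S) {x : α} (hx : x ∈ S) :
    ∃ a b, connectedComponentIn S x = Icc a b :=
  ⟨_, _, eq_Icc_of_connected_compact (isConnected_connectedComponentIn_iff.mpr hx)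
    (hS.of_isClosed_subset (hS.isClosed.isClosed_connectedComponentIn x)
      (connectedComponentIn_subset S x))⟩

theorem measure_le_card_mul_of_connectedComponentIn_mem {X : Type*} [TopologicalSpace X]
    [MeasurableSpace X] (μ : Measure X) {S : Set X} {C : Finset (Set X)} {δ : ENNReal}
    (hC : ∀ x ∈ S, connectedComponentIn S x ∈ C)
    (hδ : ∀ x ∈ S, μ (connectedComponentIn S x) ≤ δ) :
    μ S ≤ C.card * δ := by
  classical
  let C' := C.filter fun c => ∃ x ∈ S, connectedComponentIn S x = c
  calc μ S ≤ μ (⋃ c ∈ C', c) := measure_mono fun x hx =>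
        mem_biUnion (Finset.mem_filter.mpr ⟨hC x hx, x, hx, rfl⟩) (mem_connectedComponentIn hx)
    _ ≤ ∑ c ∈ C', μ c := measure_biUnion_finset_le _ _
    _ ≤ ∑ _c ∈ C', δ := Finset.sum_le_sum fun c hc => by
        obtain ⟨x, hx, rfl⟩ := (Finset.mem_filter.mp hc).2
        exact hδ x hx
    _ = C'.card * δ := by rw [Finset.sum_const, nsmul_eq_mul]
    _ ≤ C.card * δ := by gcongr ?_ * δ; exact_mod_cast Finset.card_filter_le C _

theorem le_rpow_one_div_mul_of_le_mul_div_rpow {M m ε r ℓ L : ℝ} (hM : 0 < M) (hr : 0 < r)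
    (hℓ : 0 < ℓ) (hL : 0 < L) (h : M ≤ m * (L / ℓ) ^ r * ε) :
    ℓ ≤ (m * (ε / M)) ^ (1 / r) * L := by
  have hx : 0 < (ℓ / L) ^ r := Real.rpow_pos_of_pos (div_pos hℓ hL) r
  have hpow : (ℓ / L) ^ r ≤ m * (ε / M) := by
    rw [← inv_div, Real.inv_rpow (div_pos hℓ hL).le] at h
    rw [mul_div_assoc', le_div_iff₀ hM]
    calc (ℓ / L) ^ r * M ≤ (ℓ / L) ^ r * (m * ((ℓ / L) ^ r)⁻¹ * ε) := by gcongr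
      _ = m * ε := by field_simp
  rw [← div_le_iff₀ hL, one_div, Real.le_rpow_inv_iff_of_pos (div_pos hℓ hL).le
    (hx.le.trans hpow) hr]
  exact hpow

theorem sub_le_of_remez {f : ℝ → ℝ} {a b m r ε : ℝ}
    (hnorm : 0 < sSup ((fun t => |f t|) '' Icc a b)) (hm : 0 ≤ m) (hr : 0 < r)
    (hRemez : ∀ a' b' : ℝ, a ≤ a' → a' < b' → b' ≤ b →
      sSup ((fun t => |f t|) '' Icc a b) ≤
        m * ((b - a) / (b' - a')) ^ r * sSup ((fun t => |f t|) '' Icc a' b'))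
    {a' b' : ℝ} (ha' : a ≤ a') (hab' : a' ≤ b') (hb' : b' ≤ b)
    (hfε : ∀ t ∈ Icc a' b', |f t| ≤ ε) :
    b' - a' ≤ (m * (ε / sSup ((fun t => |f t|) '' Icc a b))) ^ (1 / r) * (b - a) := by
  have hε : 0 ≤ ε := (abs_nonneg _).trans (hfε a' ⟨le_rfl, hab'⟩)
  rcases hab'.eq_or_lt with rfl | hlt
  · rw [sub_self]
    exact mul_nonneg (Real.rpow_nonneg (by positivity) _) (by linarith)
  have hsup : sSup ((fun t => |f t|) '' Icc a' b') ≤ ε :=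
    csSup_le ((nonempty_Icc.mpr hab').image _) (forall_mem_image.mpr hfε)
  refine le_rpow_one_div_mul_of_le_mul_div_rpow hnorm hr (sub_pos.mpr hlt) (by linarith) ?_
  calc _ ≤ _ := hRemez a' b' ha' hlt hb'
    _ ≤ _ := mul_le_mul_of_nonneg_left hsup <|
      mul_nonneg hm (Real.rpow_nonneg (div_nonneg (by linarith) (by linarith)) r)

theorem remez_implies_C_alpha_good_general
    (a b : ℝ) (f : ℝ → ℝ) (hf : ContinuousOn f (Icc a b))
    (hnorm : 0 < sSup ((fun t => |f t|) '' Icc a b))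
    (m r : ℝ) (hm : 1 ≤ m) (hr : 0 < r)
    (hRemez : ∀ a' b' : ℝ, a ≤ a' → a' < b' → b' ≤ b →
      sSup ((fun t => |f t|) '' Icc a b) ≤
        m * ((b - a) / (b' - a')) ^ r * sSup ((fun t => |f t|) '' Icc a' b'))
    (K : ℕ)
    (hcomp : ∀ ε : ℝ, 0 < ε →
      ∃ C : Finset (Set ℝ), C.card ≤ K ∧
        ∀ t ∈ {s ∈ Icc a b | |f s| ≤ ε},
          connectedComponentIn {s ∈ Icc a b | |f s| ≤ ε} t ∈ C) :
    ∀ ε : ℝ, 0 < ε →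
      volume {t ∈ Icc a b | |f t| ≤ ε} ≤
        ENNReal.ofReal
          (m ^ (1 / r) * K * (ε / sSup ((fun t => |f t|) '' Icc a b)) ^ (1 / r) * (b - a)) := by
  intro ε hε
  set M := sSup ((fun t => |f t|) '' Icc a b)
  set S := {s ∈ Icc a b | |f s| ≤ ε}
  have hS : IsCompact S := isCompact_Icc.of_isClosed_subset
    (hf.abs.preimage_isClosed_of_isClosed isClosed_Icc isClosed_Iic) (sep_subset _ _)
  have hm0 : 0 ≤ m := zero_le_one.trans hm
  have hcomp_vol : ∀ t ∈ S,
      volume (connectedComponentIn S t) ≤ ENNReal.ofReal ((m * (ε / M)) ^ (1 / r) * (b - a)) := by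
    intro t ht
    obtain ⟨a', b', hc⟩ := hS.exists_connectedComponentIn_eq_Icc ht
    have hsub : Icc a' b' ⊆ S := hc ▸ connectedComponentIn_subset S t
    have hab' : a' ≤ b' := nonempty_Icc.mp (hc ▸ ⟨t, mem_connectedComponentIn ht⟩)
    rw [hc, Real.volume_Icc]
    exact ENNReal.ofReal_le_ofReal <| sub_le_of_remez hnorm hm0 hr hRemez
      (hsub (left_mem_Icc.mpr hab')).1.1 hab' (hsub (right_mem_Icc.mpr hab')).1.2
      fun s hs => (hsub hs).2
  obtain ⟨C, hCcard, hCmem⟩ := hcomp ε hε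
  calc volume S ≤ C.card * ENNReal.ofReal ((m * (ε / M)) ^ (1 / r) * (b - a)) :=
        measure_le_card_mul_of_connectedComponentIn_mem volume hCmem hcomp_vol
    _ ≤ K * ENNReal.ofReal ((m * (ε / M)) ^ (1 / r) * (b - a)) := by gcongr
    _ = _ := by
      rw [← ENNReal.ofReal_natCast, ← ENNReal.ofReal_mul (Nat.cast_nonneg K),
        Real.mul_rpow hm0 (div_pos hε hnorm).le]
      congr 1
      ring

/-- Let `I = [a,b]` be a bounded interval of positive length and
`f : I → ℝ` continuous with `‖f‖_I > 0`. Suppose there are `m ≥ 1` and `r > 0` such that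
`‖f‖_I ≤ m·(|I|/|I′|)^r·‖f‖_{I′}` for every subinterval `I′ ⊆ I` of positive length, and
suppose `K ≥ 1` is an integer such that for every `ε > 0` the sublevel set
`{t ∈ I : |f(t)| ≤ ε}` has at most `K` connected components. Then for every `ε > 0`,
`|{t ∈ I : |f(t)| ≤ ε}| ≤ m^{1/r} · K · (ε/‖f‖_I)^{1/r} · |I|`. -/
theorem remez_implies_C_alpha_good
    (a b : ℝ) (hab : a < b) (f : ℝ → ℝ) (hf : ContinuousOn f (Icc a b))
    (hnorm : 0 < sSup ((fun t => |f t|) '' Icc a b))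
    (m r : ℝ) (hm : 1 ≤ m) (hr : 0 < r)
    (hRemez : ∀ a' b' : ℝ, a ≤ a' → a' < b' → b' ≤ b →
      sSup ((fun t => |f t|) '' Icc a b) ≤
        m * ((b - a) / (b' - a')) ^ r * sSup ((fun t => |f t|) '' Icc a' b'))
    (K : ℕ) (hK : 1 ≤ K)
    (hcomp : ∀ ε : ℝ, 0 < ε →
      ∃ C : Finset (Set ℝ), C.card ≤ K ∧
        ∀ t ∈ {s ∈ Icc a b | |f s| ≤ ε},
          connectedComponentIn {s ∈ Icc a b | |f s| ≤ ε} t ∈ C) :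
    ∀ ε : ℝ, 0 < ε →
      volume {t ∈ Icc a b | |f t| ≤ ε} ≤
        ENNReal.ofReal
          (m ^ (1 / r) * K * (ε / sSup ((fun t => |f t|) '' Icc a b)) ^ (1 / r) * (b - a)) :=
  remez_implies_C_alpha_good_general a b f hf hnorm m r hm hr hRemez K hcomp
end

section
/- Let T₀ ≥ 1, ν ≥ 0, C > 0, α > 0, and let f : [T₀,∞) → ℝ be such that the function g(t) := t^ν · f(t) is (C,α)-good on [T₀,∞). Then for every interval [x,y] ⊆ [T₀,∞) such that |f(t)| ≤ |f(y)| for all t ∈ [x,y] and |f(y)| > 0, and for every η > 0, the Lebesgue measure |{t ∈ [x,y] : |f(t)| ≤ η}| ≤ C·(η/|f(y)|)^α·(y−x). -/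
open Set MeasureTheory

/-- A function `g` is `(C,α)`-good on the ray `[T₀,∞)` if for every bounded interval
`I = [a,b] ⊆ [T₀,∞)` with `‖g‖_I > 0` and every `ε > 0`,
`|{t ∈ I : |g(t)| ≤ ε}| ≤ C·(ε/‖g‖_I)^α·|I|`, where `‖g‖_I = sup_{t∈I}|g(t)|`. -/
def IsCAlphaGood (C α T₀ : ℝ) (g : ℝ → ℝ) : Prop :=
  ∀ a b : ℝ, T₀ ≤ a → a ≤ b →
    0 < sSup ((fun t => |g t|) '' Icc a b) →
    ∀ ε : ℝ, 0 < ε →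
      volume {t ∈ Icc a b | |g t| ≤ ε} ≤
        ENNReal.ofReal
          (C * (ε / sSup ((fun t => |g t|) '' Icc a b)) ^ α * (b - a))

/-!
On `[x, y]` the weight `t ^ ν` is nonnegative and nondecreasing, so `|t ^ ν f(t)|` is maximal at
`y`, with value `y ^ ν |f(y)|`. Applying goodness of `g = t ^ ν f` on `[x, y]` with
`ε = y ^ ν η` gives the claim: `{|f| ≤ η} ⊆ {|g| ≤ y ^ ν η}` and the factor `y ^ ν` cancels
in `ε / ‖g‖_{[x,y]}`.
-/

section Weighted

variable {w f : ℝ → ℝ} {x y : ℝ}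

theorem abs_mul_le_of_monotoneOn (hw0 : ∀ t ∈ Icc x y, 0 ≤ w t) (hw : MonotoneOn w (Icc x y))
    (hxy : x ≤ y) {t η : ℝ} (ht : t ∈ Icc x y) (hft : |f t| ≤ η) :
    |w t * f t| ≤ w y * η := by
  have hy : y ∈ Icc x y := ⟨hxy, le_rfl⟩
  calc |w t * f t| = w t * |f t| := by rw [abs_mul, abs_of_nonneg (hw0 t ht)]
    _ ≤ w y * η :=
      mul_le_mul (hw ht hy ht.2) hft (abs_nonneg _) ((hw0 t ht).trans (hw ht hy ht.2))

theorem sSup_abs_mul_image_Icc (hw0 : ∀ t ∈ Icc x y, 0 ≤ w t) (hw : MonotoneOn w (Icc x y))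
    (hxy : x ≤ y) (hmax : ∀ t ∈ Icc x y, |f t| ≤ |f y|) :
    sSup ((fun t => |w t * f t|) '' Icc x y) = w y * |f y| := by
  have hy : y ∈ Icc x y := ⟨hxy, le_rfl⟩
  refine IsGreatest.csSup_eq ⟨⟨y, hy, ?_⟩, ?_⟩
  · simp only [abs_mul, abs_of_nonneg (hw0 y hy)]
  · rintro _ ⟨t, ht, rfl⟩
    exact abs_mul_le_of_monotoneOn hw0 hw hxy ht (hmax t ht)

theorem IsCAlphaGood.volume_le_of_monotoneOn_weight {C α T₀ : ℝ}
    (hgood : IsCAlphaGood C α T₀ (fun t => w t * f t)) (hx : T₀ ≤ x) (hxy : x ≤ y)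
    (hw0 : ∀ t ∈ Icc x y, 0 ≤ w t) (hw : MonotoneOn w (Icc x y)) (hwy : 0 < w y)
    (hmax : ∀ t ∈ Icc x y, |f t| ≤ |f y|) (hfy : 0 < |f y|) {η : ℝ} (hη : 0 < η) :
    volume {t ∈ Icc x y | |f t| ≤ η} ≤ ENNReal.ofReal (C * (η / |f y|) ^ α * (y - x)) := by
  have hsup := sSup_abs_mul_image_Icc hw0 hw hxy hmax
  have hbound := hgood x y hx hxy (hsup ▸ mul_pos hwy hfy) (w y * η) (mul_pos hwy hη)
  rw [hsup, mul_div_mul_left η _ hwy.ne'] at hbound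
  refine (measure_mono ?_).trans hbound
  exact fun t ⟨ht, hft⟩ => ⟨ht, abs_mul_le_of_monotoneOn hw0 hw hxy ht hft⟩

end Weighted

theorem right_max_good_of_rpow_good_general
    (T₀ ν C α : ℝ) (hT₀ : 1 ≤ T₀) (hν : 0 ≤ ν)
    (f : ℝ → ℝ)
    (hgood : IsCAlphaGood C α T₀ (fun t => t ^ ν * f t)) :
    ∀ x y : ℝ, T₀ ≤ x → x ≤ y →
      (∀ t ∈ Icc x y, |f t| ≤ |f y|) → 0 < |f y| →
      ∀ η : ℝ, 0 < η →
        volume {t ∈ Icc x y | |f t| ≤ η} ≤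
          ENNReal.ofReal (C * (η / |f y|) ^ α * (y - x)) := by
  intro x y hx hxy hmax hfy η hη
  have hpos : ∀ t ∈ Icc x y, 0 < t := fun t ht => by linarith [ht.1]
  refine hgood.volume_le_of_monotoneOn_weight hx hxy
    (fun t ht => (Real.rpow_pos_of_pos (hpos t ht) ν).le) ?_
    (Real.rpow_pos_of_pos (hpos y ⟨hxy, le_rfl⟩) ν) hmax hfy hη
  exact fun s hs t _ hst => Real.rpow_le_rpow (hpos s hs).le hst hν

/-- Let `T₀ ≥ 1`, `ν ≥ 0`, `C > 0`, `α > 0`, and `f : [T₀,∞) → ℝ` be such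
that `g(t) := t^ν·f(t)` is `(C,α)`-good on `[T₀,∞)`. Then for every interval
`[x,y] ⊆ [T₀,∞)` such that `|f(t)| ≤ |f(y)|` on `[x,y]` and `|f(y)| > 0`, and every `η > 0`,
`|{t ∈ [x,y] : |f(t)| ≤ η}| ≤ C·(η/|f(y)|)^α·(y−x)`. -/
theorem right_max_good_of_rpow_good
    (T₀ ν C α : ℝ) (hT₀ : 1 ≤ T₀) (hν : 0 ≤ ν) (hC : 0 < C) (hα : 0 < α)
    (f : ℝ → ℝ)
    (hgood : IsCAlphaGood C α T₀ (fun t => t ^ ν * f t)) :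
    ∀ x y : ℝ, T₀ ≤ x → x ≤ y →
      (∀ t ∈ Icc x y, |f t| ≤ |f y|) → 0 < |f y| →
      ∀ η : ℝ, 0 < η →
        volume {t ∈ Icc x y | |f t| ≤ η} ≤
          ENNReal.ofReal (C * (η / |f y|) ^ α * (y - x)) :=
  right_max_good_of_rpow_good_general T₀ ν C α hT₀ hν f hgood
end

section
/- Let h : (0,∞) → ℝ be a differentiable function such that h′(t) → 1 as t → ∞, and let F : ℝ → ℝ be bounded and continuous. Then (1/T)·∫₀^T (F(h(t)) − F(t)) dt → 0 as T → ∞. -/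
/-!
Let `G` be a primitive of `F` and `D T = ∫₀ᵀ (F ∘ h - F)`. If a function's derivative tends to
`l` at infinity, the function is `l x + o(x)`. Applied to `h` this gives `h T - T = o(T)`, hence
`G (h T) - G T = O(h T - T) = o(T)` since `G` is `M`-Lipschitz. Applied to
`D - (G ∘ h - G)`, whose derivative `F (h T) (1 - h' T)` tends to `0`, it gives
`D T - (G (h T) - G T) = o(T)`. Together, `D T = o(T)`.
-/

open Filter Topology MeasureTheory Asymptotics Set

variable {E : Type*} [NormedAddCommGroup E] [NormedSpace ℝ E]

theorem isLittleO_sub_smul_of_tendsto_deriv {f f' : ℝ → E} {l : E}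
    (hf : ∀ᶠ x in atTop, HasDerivAt f (f' x) x) (hf' : Tendsto f' atTop (𝓝 l)) :
    (fun x => f x - x • l) =o[atTop] id := by
  rw [isLittleO_iff]
  intro c hc
  obtain ⟨A, hA⟩ := eventually_atTop.1 <|
    (hf.and (hf'.eventually (Metric.closedBall_mem_nhds l (half_pos hc)))).and
      (eventually_ge_atTop 0)
  have hA0 : 0 ≤ A := (hA A le_rfl).2
  have hslope : ∀ x ≥ A, ‖(f x - x • l) - (f A - A • l)‖ ≤ c / 2 * (x - A) := by
    intro x hx
    refine norm_image_sub_le_of_norm_deriv_le_segment' (f := fun y => f y - y • l)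
      (f' := fun y => f' y - l) (fun y hy => ?_) (fun y hy => ?_) x ⟨hx, le_rfl⟩
    · exact (((hA y hy.1).1.1).sub ((hasDerivAt_id y).smul_const l)).hasDerivWithinAt.congr_deriv
        (by simp)
    · simpa [dist_eq_norm] using (hA y hy.1).1.2
  filter_upwards [eventually_ge_atTop A, eventually_ge_atTop (2 * ‖f A - A • l‖ / c)]
    with x hxA hxc
  rw [div_le_iff₀ hc] at hxc
  calc ‖f x - x • l‖ ≤ ‖f A - A • l‖ + ‖(f x - x • l) - (f A - A • l)‖ :=
        norm_le_norm_add_norm_sub' _ _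
    _ ≤ c / 2 * x + c / 2 * (x - A) := by gcongr <;> linarith [hslope x hxA]
    _ ≤ c * ‖id x‖ := by rw [id, Real.norm_of_nonneg (hA0.trans hxA)]; nlinarith

theorem norm_integral_sub_integral_le [CompleteSpace E] {F : ℝ → E} {M : ℝ} (hF : Continuous F)
    (hM : ∀ x, ‖F x‖ ≤ M) (a b c : ℝ) :
    ‖(∫ t in a..b, F t) - ∫ t in a..c, F t‖ ≤ M * |b - c| := by
  rw [intervalIntegral.integral_interval_sub_left (hF.intervalIntegrable _ _)
    (hF.intervalIntegrable _ _)]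
  exact intervalIntegral.norm_integral_le_of_norm_le_const fun x _ => hM x

theorem hasDerivAt_integral_of_continuousOn_Ioi [CompleteSpace E] {g : ℝ → E} {a M T : ℝ}
    (hg : ContinuousOn g (Ioi a)) (hM : ∀ x, ‖g x‖ ≤ M) (hT : a < T) :
    HasDerivAt (fun u => ∫ t in a..u, g t) (g T) T := by
  have hint : IntervalIntegrable g volume a T := by
    rw [intervalIntegrable_iff_integrableOn_Ioc_of_le hT.le]
    exact .of_bound measure_Ioc_lt_top
      ((hg.mono Ioc_subset_Ioi_self).aestronglyMeasurable measurableSet_Ioc) M (ae_of_all _ hM)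
  exact intervalIntegral.integral_hasDerivAt_right hint
    (hg.stronglyMeasurableAtFilter isOpen_Ioi T hT) (hg.continuousAt (Ioi_mem_nhds hT))

/-- Let `h : (0,∞) → ℝ` be differentiable with `h′(t) → 1` as `t → ∞`,
and let `F : ℝ → ℝ` be bounded and continuous. Then
`(1/T)·∫₀^T (F(h(t)) − F(t)) dt → 0` as `T → ∞`. -/
theorem average_difference_tendsto_zero
    (h : ℝ → ℝ) (hdiff : ∀ t : ℝ, 0 < t → DifferentiableAt ℝ h t)
    (hderiv : Tendsto (deriv h) atTop (𝓝 1))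
    (F : ℝ → ℝ) (hFcont : Continuous F) (hFbdd : ∃ M : ℝ, ∀ x, |F x| ≤ M) :
    Tendsto (fun T : ℝ => (1 / T) * ∫ t in (0:ℝ)..T, (F (h t) - F t))
      atTop (𝓝 0) := by
  obtain ⟨M, hM⟩ := hFbdd
  set G : ℝ → ℝ := fun x => ∫ t in (0:ℝ)..x, F t
  set D : ℝ → ℝ := fun T => ∫ t in (0:ℝ)..T, (F (h t) - F t)
  have hh' : ∀ᶠ t in atTop, HasDerivAt h (deriv h t) t :=
    (eventually_gt_atTop 0).mono fun t ht => (hdiff t ht).hasDerivAt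
  have hh : (fun t => h t - t) =o[atTop] id := by
    simpa using isLittleO_sub_smul_of_tendsto_deriv hh' hderiv
  have hGh : (fun T => G (h T) - G T) =o[atTop] id :=
    (IsBigO.of_bound M <| .of_forall fun T => norm_integral_sub_integral_le hFcont hM _ _ _)
      |>.trans_isLittleO hh
  have hD : ∀ T > 0, HasDerivAt D (F (h T) - F T) T := fun T hT =>
    hasDerivAt_integral_of_continuousOn_Ioi (M := 2 * M)
      ((hFcont.comp_continuousOn fun t ht => (hdiff t ht).continuousAt.continuousWithinAt).sub
        hFcont.continuousOn)
      (fun t => by rw [Real.norm_eq_abs]; linarith [abs_sub (F (h t)) (F t), hM (h t), hM t]) hT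
  have hE' : ∀ᶠ T in atTop,
      HasDerivAt (fun T => D T - (G (h T) - G T)) (F (h T) * (1 - deriv h T)) T := by
    filter_upwards [hh', eventually_gt_atTop 0] with T hT hT0
    have hG : ∀ x, HasDerivAt G (F x) x := fun x =>
      (hFcont.integral_hasStrictDerivAt 0 x).hasDerivAt
    exact ((hD T hT0).sub (((hG (h T)).comp T hT).sub (hG T))).congr_deriv (by ring)
  have hE'lim : Tendsto (fun T => F (h T) * (1 - deriv h T)) atTop (𝓝 0) :=
    isBoundedUnder_le_mul_tendsto_zero ⟨M, eventually_map.2 (.of_forall fun T => hM (h T))⟩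
      (by simpa using (tendsto_const_nhds (x := (1 : ℝ))).sub hderiv)
  have hE : (fun T => D T - (G (h T) - G T)) =o[atTop] id := by
    simpa using isLittleO_sub_smul_of_tendsto_deriv hE' hE'lim
  have : D =o[atTop] id := by simpa using hE.add hGh
  simpa only [one_div_mul_eq_div, id] using this.tendsto_div_nhds_zero
end

section
/- Let n ≥ 2, let Γ be a discrete subgroup of SL(n,ℝ), and let X = SL(n,ℝ)/Γ be the quotient space with the quotient topology, on which SL(n,ℝ) acts by left translations. Let φ : [0,∞) → SL(n,ℝ) be continuous, let h : (0,∞) → (0,∞) be differentiable with h′(t) → 1 as t → ∞, and suppose there exists ρ ∈ SL(n,ℝ) such that φ(h(t))·φ(t)⁻¹ → ρ as t → ∞. Then for every continuous compactly supported function f : X → ℝ and every x ∈ X, (1/T)·∫₀^T ( f(ρ·φ(t)·x) − f(φ(t)·x) ) dt → 0 as T → ∞. -/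
open Filter Topology Matrix

/-- The matrix topology on `SL(n,ℝ)`, i.e. the subspace topology induced from `n×n` matrices. -/
instance specialLinearGroupTopology (n : ℕ) :
    TopologicalSpace (Matrix.SpecialLinearGroup (Fin n) ℝ) :=
  TopologicalSpace.induced
    (fun g => (g : Matrix (Fin n) (Fin n) ℝ)) inferInstance

/-!
Write `F t = f (φ t • x)`. Since `φ (h t) * (φ t)⁻¹ → ρ` and a compactly supported continuous
function is uniformly continuous along the action, `f (ρ • φ t • x) - F (h t) → 0`, so it suffices
to compare the averages of `F ∘ h` and `F`. The substitution `s = h t` turns `∫ F (h t) h' t` into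
the integral of `F` over `[h a, h T]`; as `h' → 1`, replacing the weight `h'` by `1` costs `o(T)`,
and so does moving the endpoints, since `h T - T = o(T)` by the mean value theorem and `F` is
bounded.
-/

open Set MeasureTheory intervalIntegral
open scoped Pointwise

namespace Matrix.SpecialLinearGroup

variable {n : ℕ}

theorem isClosedEmbedding_coe :
    IsClosedEmbedding (fun g : SpecialLinearGroup (Fin n) ℝ => (g : Matrix (Fin n) (Fin n) ℝ)) := by
  refine ⟨⟨⟨rfl⟩, Subtype.coe_injective⟩, ?_⟩
  have hrange : range (fun g : SpecialLinearGroup (Fin n) ℝ => (g : Matrix (Fin n) (Fin n) ℝ)) =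
      {A | A.det = 1} :=
    Set.ext fun A => ⟨by rintro ⟨g, rfl⟩; exact g.2, fun hA => ⟨⟨A, hA⟩, rfl⟩⟩
  rw [hrange]
  exact isClosed_eq continuous_id.matrix_det continuous_const

instance : IsTopologicalGroup (SpecialLinearGroup (Fin n) ℝ) where
  continuous_mul := continuous_induced_rng.2 <|
    (continuous_induced_dom.comp continuous_fst).matrix_mul
      (continuous_induced_dom.comp continuous_snd)
  continuous_inv := continuous_induced_rng.2 continuous_induced_dom.matrix_adjugate

instance : LocallyCompactSpace (SpecialLinearGroup (Fin n) ℝ) :=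
  have : LocallyCompactSpace (Matrix (Fin n) (Fin n) ℝ) :=
    inferInstanceAs (LocallyCompactSpace (Fin n → Fin n → ℝ))
  isClosedEmbedding_coe.locallyCompactSpace

end Matrix.SpecialLinearGroup

theorem HasCompactSupport.tendstoUniformly_comp_smul {G X : Type*} [Group G] [TopologicalSpace G]
    [IsTopologicalGroup G] [WeaklyLocallyCompactSpace G] [TopologicalSpace X] [MulAction G X]
    [ContinuousSMul G X] {f : X → ℝ} (hf : Continuous f) (hfc : HasCompactSupport f) (ρ : G) :
    TendstoUniformly (fun g y => f (g • y)) (fun y => f (ρ • y)) (𝓝 ρ) := by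
  refine Metric.tendstoUniformly_iff.2 fun ε hε => ?_
  obtain ⟨K, hK, hKρ⟩ := exists_compact_mem_nhds ρ
  have hC : IsCompact (K⁻¹ • tsupport f) := hK.inv.smul_set hfc
  have hvanish : ∀ g ∈ K, ∀ y ∉ K⁻¹ • tsupport f, f (g • y) = 0 := fun g hg y hy =>
    image_eq_zero_of_notMem_tsupport fun hgy =>
      hy ⟨g⁻¹, inv_mem_inv.2 hg, g • y, hgy, inv_smul_smul g y⟩
  have hnear : ∀ᶠ g in 𝓝 ρ, ∀ y ∈ K⁻¹ • tsupport f, dist (f (ρ • y)) (f (g • y)) < ε := by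
    refine hC.eventually_forall_of_forall_eventually fun y _ => ?_
    have hcont : Continuous fun p : G × X => dist (f (ρ • p.2)) (f (p.1 • p.2)) :=
      (hf.comp (continuous_snd.const_smul ρ)).dist (hf.comp (continuous_fst.smul continuous_snd))
    exact hcont.continuousAt.eventually_lt continuousAt_const (by simpa using hε)
  filter_upwards [hnear, hKρ] with g hg hgK y
  by_cases hy : y ∈ K⁻¹ • tsupport f
  · exact hg y hy
  · rw [hvanish g hgK y hy, hvanish ρ (mem_of_mem_nhds hKρ) y hy, dist_self]
    exact hε

theorem tendsto_one_div_mul_of_forall_abs_le_add_mul {g : ℝ → ℝ}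
    (hg : ∀ ε > 0, ∃ C, ∀ᶠ T in atTop, |g T| ≤ C + ε * T) :
    Tendsto (fun T => 1 / T * g T) atTop (𝓝 0) := by
  have hlittle : g =o[atTop] id := Asymptotics.isLittleO_iff.2 fun ε hε => by
    obtain ⟨C, hC⟩ := hg (ε / 2) (half_pos hε)
    filter_upwards [hC, eventually_ge_atTop (2 * C / ε), eventually_ge_atTop 0] with T h1 h2 h3
    rw [Real.norm_eq_abs, id, Real.norm_eq_abs, abs_of_nonneg h3]
    rw [div_le_iff₀ hε] at h2
    linarith
  simpa only [one_div_mul_eq_div, id] using hlittle.tendsto_div_nhds_zero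

theorem integral_comp_sub_eq {F h : ℝ → ℝ} {c a T : ℝ} (hca : c ≤ a) (haT : a ≤ T)
    (hF : ContinuousOn F (Ici c)) (hh : ∀ t ∈ Icc a T, DifferentiableAt ℝ h t)
    (hhc : ∀ t ∈ Icc a T, c ≤ h t) (hmono : ∀ t ∈ Icc a T, 0 ≤ deriv h t) :
    ∫ t in a..T, (F (h t) - F t) = (∫ t in a..T, F (h t) * (1 - deriv h t)) +
      ((∫ s in T..h T, F s) - ∫ s in a..h a, F s) := by
  have hFint : ∀ p q, c ≤ p → c ≤ q → IntervalIntegrable F volume p q := fun p q hp hq =>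
    (hF.mono (ordConnected_Ici.uIcc_subset hp hq)).intervalIntegrable
  have hIoo : Ioo (min a T) (max a T) ⊆ Icc a T := by
    rw [min_eq_left haT, max_eq_right haT]; exact Ioo_subset_Icc_self
  have hhcont : ContinuousOn h (uIcc a T) := by
    rw [uIcc_of_le haT]; exact fun t ht => (hh t ht).continuousAt.continuousWithinAt
  have hderiv : ∀ t ∈ Ioo (min a T) (max a T), HasDerivAt h (deriv h t) t :=
    fun t ht => (hh t (hIoo ht)).hasDerivAt
  have hFh : IntervalIntegrable (fun t => F (h t)) volume a T :=
    (hF.comp hhcont fun t ht => hhc t (by rwa [uIcc_of_le haT] at ht)).intervalIntegrable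
  have hha : c ≤ h a := hhc a ⟨le_rfl, haT⟩
  -- Monotonicity of `h` lets the substitution `s = h t` go through without any integrability
  -- hypothesis on `deriv h`.
  have hsubst : ∫ t in a..T, F (h t) * deriv h t = ∫ s in h a..h T, F s :=
    integral_comp_mul_deriv_of_deriv_nonneg hhcont hderiv fun t ht => hmono t (hIoo ht)
  have hsubst_int : IntervalIntegrable (fun t => F (h t) * deriv h t) volume a T :=
    (integrable_comp_mul_deriv_iff_of_deriv_nonneg hhcont hderiv fun t ht => hmono t (hIoo ht)).2
      (hFint _ _ hha (hhc T ⟨haT, le_rfl⟩))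
  have hweight : ∫ t in a..T, F (h t) * (1 - deriv h t) =
      (∫ t in a..T, F (h t)) - ∫ s in h a..h T, F s := by
    rw [← hsubst, ← integral_sub hFh hsubst_int]
    congr 1 with t
    ring
  rw [integral_sub hFh (hFint a T hca (hca.trans haT)), hweight,
    ← integral_interval_sub_interval_comm' (hFint _ _ hha (hhc T ⟨haT, le_rfl⟩))
      (hFint a T hca (hca.trans haT)) (hFint _ _ hha hca)]
  ring

theorem abs_integral_comp_sub_le {F h : ℝ → ℝ} {c a T M ε : ℝ} (hca : c ≤ a) (haT : a ≤ T)
    (hε : ε ≤ 1) (hF : ContinuousOn F (Ici c)) (hFM : ∀ s, |F s| ≤ M)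
    (hh : ∀ t ∈ Icc a T, DifferentiableAt ℝ h t) (hhc : ∀ t ∈ Icc a T, c ≤ h t)
    (hh' : ∀ t ∈ Icc a T, |deriv h t - 1| ≤ ε) :
    |∫ t in a..T, (F (h t) - F t)| ≤ 2 * M * |h a - a| + 2 * ε * M * (T - a) := by
  have hM : 0 ≤ M := (abs_nonneg _).trans (hFM 0)
  have hmono : ∀ t ∈ Icc a T, 0 ≤ deriv h t := fun t ht => by
    linarith [(abs_le.1 (hh' t ht)).1]
  have hdrift : |h T - T - (h a - a)| ≤ ε * (T - a) :=
    norm_image_sub_le_of_norm_deriv_le_segment' (f := fun t => h t - t)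
      (fun t ht => ((hh t ht).hasDerivAt.sub (hasDerivAt_id t)).hasDerivWithinAt)
      (fun t ht => hh' t (Ico_subset_Icc_self ht)) T ⟨haT, le_rfl⟩
  have hend : |h T - T| ≤ |h a - a| + ε * (T - a) := by
    linarith [abs_sub_abs_le_abs_sub (h T - T) (h a - a)]
  have hFbound : ∀ p q, |∫ s in p..q, F s| ≤ M * |q - p| := fun p q =>
    intervalIntegral.norm_integral_le_of_norm_le_const (f := F) (a := p) (b := q) fun s _ => hFM s
  have hweight : |∫ t in a..T, F (h t) * (1 - deriv h t)| ≤ M * ε * (T - a) := by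
    rw [← abs_of_nonneg (sub_nonneg.2 haT)]
    refine intervalIntegral.norm_integral_le_of_norm_le_const
      (f := fun t => F (h t) * (1 - deriv h t)) fun t ht => ?_
    rw [uIoc_of_le haT] at ht
    rw [Real.norm_eq_abs, abs_mul, abs_sub_comm]
    exact mul_le_mul (hFM _) (hh' t (Ioc_subset_Icc_self ht)) (abs_nonneg _) hM
  rw [integral_comp_sub_eq hca haT hF hh hhc hmono]
  calc _ ≤ |∫ t in a..T, F (h t) * (1 - deriv h t)| +
        (|∫ s in T..h T, F s| + |∫ s in a..h a, F s|) :=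
        (abs_add_le _ _).trans (by gcongr; exact abs_sub _ _)
    _ ≤ M * ε * (T - a) + (M * (|h a - a| + ε * (T - a)) + M * |h a - a|) := by
        gcongr
        · exact (hFbound T (h T)).trans (mul_le_mul_of_nonneg_left hend hM)
        · exact hFbound a (h a)
    _ = 2 * M * |h a - a| + 2 * ε * M * (T - a) := by ring

theorem tendsto_one_div_mul_integral_sub_of_tendsto_sub_comp {u F h : ℝ → ℝ} {M : ℝ}
    (hu : ContinuousOn u (Ici 0)) (hF : ContinuousOn F (Ici 0)) (hFM : ∀ s, |F s| ≤ M)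
    (hh : ∀ᶠ t in atTop, DifferentiableAt ℝ h t) (hh0 : ∀ᶠ t in atTop, 0 ≤ h t)
    (hderiv : Tendsto (deriv h) atTop (𝓝 1))
    (huF : Tendsto (fun t => u t - F (h t)) atTop (𝓝 0)) :
    Tendsto (fun T => 1 / T * ∫ t in (0 : ℝ)..T, (u t - F t)) atTop (𝓝 0) := by
  have hM : 0 ≤ M := (abs_nonneg _).trans (hFM 0)
  refine tendsto_one_div_mul_of_forall_abs_le_add_mul fun ε hε => ?_
  set δ := min 1 (ε / (1 + 2 * M))
  have hδ : 0 < δ := lt_min one_pos (by positivity)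
  have hδε : δ * (1 + 2 * M) ≤ ε := (le_div_iff₀ (by positivity)).1 (min_le_right _ _)
  have hlate : ∀ᶠ t in atTop, 0 ≤ t ∧ DifferentiableAt ℝ h t ∧ 0 ≤ h t ∧
      |deriv h t - 1| ≤ δ ∧ |u t - F (h t)| ≤ δ := by
    filter_upwards [eventually_ge_atTop 0, hh, hh0,
      hderiv.eventually (Metric.closedBall_mem_nhds 1 hδ),
      huF.eventually (Metric.closedBall_mem_nhds 0 hδ)] with t h0 hd hpos h1 h2
    rw [Real.dist_eq] at h1 h2
    exact ⟨h0, hd, hpos, h1, by rwa [sub_zero] at h2⟩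
  obtain ⟨a, ha⟩ := eventually_atTop.1 hlate
  refine ⟨|∫ t in (0 : ℝ)..a, (u t - F t)| + 2 * M * |h a - a|, ?_⟩
  filter_upwards [eventually_ge_atTop a] with T haT
  have ha0 : 0 ≤ a := (ha a le_rfl).1
  have hint : ∀ p q, 0 ≤ p → 0 ≤ q → IntervalIntegrable (fun t => u t - F t) volume p q :=
    fun p q hp hq => ((hu.sub hF).mono (ordConnected_Ici.uIcc_subset hp hq)).intervalIntegrable
  have hFh : ContinuousOn (fun t => F (h t)) (Icc a T) :=
    hF.comp (fun t ht => (ha t ht.1).2.1.continuousAt.continuousWithinAt)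
      fun t ht => (ha t ht.1).2.2.1
  have hsplit : ∫ t in (0 : ℝ)..T, (u t - F t) = (∫ t in (0 : ℝ)..a, (u t - F t)) +
      ((∫ t in a..T, (u t - F (h t))) + ∫ t in a..T, (F (h t) - F t)) := by
    have hIcc : Icc a T ⊆ Ici 0 := fun t ht => ha0.trans ht.1
    have h1 : IntervalIntegrable (fun t => u t - F (h t)) volume a T :=
      ((hu.mono hIcc).sub hFh).intervalIntegrable_of_Icc haT
    have h2 : IntervalIntegrable (fun t => F (h t) - F t) volume a T :=
      (hFh.sub (hF.mono hIcc)).intervalIntegrable_of_Icc haT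
    rw [← integral_add_adjacent_intervals (hint 0 a le_rfl ha0) (hint a T ha0 (ha0.trans haT)),
      ← integral_add h1 h2]
    simp only [sub_add_sub_cancel]
  have hnear : |∫ t in a..T, (u t - F (h t))| ≤ δ * (T - a) := by
    have := intervalIntegral.norm_integral_le_of_norm_le_const
      (f := fun t => u t - F (h t)) fun t ht => (ha t (uIoc_of_le haT ▸ ht).1.le).2.2.2.2
    rwa [abs_of_nonneg (sub_nonneg.2 haT)] at this
  have hdrift := abs_integral_comp_sub_le ha0 haT (min_le_left _ _) hF hFM
    (fun t ht => (ha t ht.1).2.1) (fun t ht => (ha t ht.1).2.2.1) fun t ht => (ha t ht.1).2.2.2.1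
  have hεT : δ * (1 + 2 * M) * (T - a) ≤ ε * T :=
    (mul_le_mul_of_nonneg_right hδε (sub_nonneg.2 haT)).trans
      (mul_le_mul_of_nonneg_left (by linarith) hε.le)
  rw [hsplit]
  calc _ ≤ |∫ t in (0 : ℝ)..a, (u t - F t)| +
        (|∫ t in a..T, (u t - F (h t))| + |∫ t in a..T, (F (h t) - F t)|) :=
        (abs_add_le _ _).trans (by gcongr; exact abs_add_le _ _)
    _ ≤ _ := by linarith

theorem average_invariance_under_limit_element_general
    (n : ℕ)
    (Γ : Subgroup (Matrix.SpecialLinearGroup (Fin n) ℝ))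
    (φ : ℝ → Matrix.SpecialLinearGroup (Fin n) ℝ)
    (hφ : ContinuousOn φ (Set.Ici (0:ℝ)))
    (h : ℝ → ℝ) (hpos : ∀ t : ℝ, 0 < t → 0 < h t)
    (hdiff : ∀ t : ℝ, 0 < t → DifferentiableAt ℝ h t)
    (hderiv : Tendsto (deriv h) atTop (𝓝 1))
    (ρ : Matrix.SpecialLinearGroup (Fin n) ℝ)
    (hρ : Tendsto (fun t => φ (h t) * (φ t)⁻¹) atTop (𝓝 ρ))
    (f : Matrix.SpecialLinearGroup (Fin n) ℝ ⧸ Γ → ℝ)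
    (hf : Continuous f) (hfc : HasCompactSupport f)
    (x : Matrix.SpecialLinearGroup (Fin n) ℝ ⧸ Γ) :
    Tendsto (fun T : ℝ =>
        (1 / T) * ∫ t in (0:ℝ)..T, (f (ρ • φ t • x) - f (φ t • x)))
      atTop (𝓝 0) := by
  obtain ⟨M, hM⟩ := hfc.exists_bound_of_continuous hf
  have horbit : Continuous fun g : Matrix.SpecialLinearGroup (Fin n) ℝ => g • x :=
    continuous_id.smul continuous_const
  have hclose : Tendsto (fun t => f (ρ • φ t • x) - f (φ (h t) • x)) atTop (𝓝 0) := by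
    refine Metric.tendsto_nhds.2 fun ε hε => ?_
    filter_upwards [hρ.eventually (Metric.tendstoUniformly_iff.1
      (hfc.tendstoUniformly_comp_smul hf ρ) ε hε)] with t ht
    have hy := ht (φ t • x)
    rwa [smul_smul (φ (h t) * (φ t)⁻¹), inv_mul_cancel_right, dist_eq_norm,
      ← dist_zero_right] at hy
  exact tendsto_one_div_mul_integral_sub_of_tendsto_sub_comp (u := fun t => f (ρ • φ t • x))
    (F := fun t => f (φ t • x))
    ((hf.comp (horbit.const_smul ρ)).comp_continuousOn hφ) ((hf.comp horbit).comp_continuousOn hφ)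
    (fun t => hM _) ((eventually_gt_atTop 0).mono hdiff)
    ((eventually_gt_atTop 0).mono fun t ht => (hpos t ht).le) hderiv hclose

/-- Let `Γ` be a discrete subgroup of `SL(n,ℝ)` and `X = SL(n,ℝ)/Γ` with the
quotient topology, on which `SL(n,ℝ)` acts by left translations. Let `φ : [0,∞) → SL(n,ℝ)`
be continuous, `h : (0,∞) → (0,∞)` differentiable with `h′(t) → 1` as `t → ∞`, and suppose
`φ(h(t))·φ(t)⁻¹ → ρ` for some `ρ ∈ SL(n,ℝ)`. Then for every continuous compactly supported
`f : X → ℝ` and every `x ∈ X`,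
`(1/T)·∫₀^T (f(ρ·φ(t)·x) − f(φ(t)·x)) dt → 0` as `T → ∞`. -/
theorem average_invariance_under_limit_element
    (n : ℕ) (hn : 2 ≤ n)
    (Γ : Subgroup (Matrix.SpecialLinearGroup (Fin n) ℝ))
    (hΓ : DiscreteTopology Γ)
    (φ : ℝ → Matrix.SpecialLinearGroup (Fin n) ℝ)
    (hφ : ContinuousOn φ (Set.Ici (0:ℝ)))
    (h : ℝ → ℝ) (hpos : ∀ t : ℝ, 0 < t → 0 < h t)
    (hdiff : ∀ t : ℝ, 0 < t → DifferentiableAt ℝ h t)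
    (hderiv : Tendsto (deriv h) atTop (𝓝 1))
    (ρ : Matrix.SpecialLinearGroup (Fin n) ℝ)
    (hρ : Tendsto (fun t => φ (h t) * (φ t)⁻¹) atTop (𝓝 ρ))
    (f : Matrix.SpecialLinearGroup (Fin n) ℝ ⧸ Γ → ℝ)
    (hf : Continuous f) (hfc : HasCompactSupport f)
    (x : Matrix.SpecialLinearGroup (Fin n) ℝ ⧸ Γ) :
    Tendsto (fun T : ℝ =>
        (1 / T) * ∫ t in (0:ℝ)..T, (f (ρ • φ t • x) - f (φ t • x)))
      atTop (𝓝 0) :=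
  average_invariance_under_limit_element_general n Γ φ hφ h hpos hdiff hderiv ρ hρ f hf hfc x
end

section
/- Let G be a Hausdorff topological group, let ξ : [0,∞) → G be a map, and for each s ∈ ℝ let h_s : [0,∞) → [0,∞) be a map such that h_s ∘ h_l = h_{s+l} for all s,l ∈ ℝ and h_l(t) → ∞ as t → ∞ for each l ∈ ℝ. Suppose that for each s ∈ ℝ there exists p(s) ∈ G such that ξ(h_s(t))·ξ(t)⁻¹ → p(s) as t → ∞. Then p(s+l) = p(s)·p(l) for all s,l ∈ ℝ; that is, p : ℝ → G is a group homomorphism from the additive reals to G. -/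
open Filter Topology

theorem tendsto_mul_inv_comp {α G : Type*} [Group G] [TopologicalSpace G]
    [IsTopologicalGroup G] {l : Filter α} {ξ : α → G} {f g k : α → α} {a b : G}
    (hk : ∀ᶠ t in l, f (g t) = k t) (hg : Tendsto g l l)
    (hf_lim : Tendsto (fun t => ξ (f t) * (ξ t)⁻¹) l (𝓝 a))
    (hg_lim : Tendsto (fun t => ξ (g t) * (ξ t)⁻¹) l (𝓝 b)) :
    Tendsto (fun t => ξ (k t) * (ξ t)⁻¹) l (𝓝 (a * b)) := by
  -- `ξ (f (g t)) * (ξ t)⁻¹ = (ξ (f (g t)) * (ξ (g t))⁻¹) * (ξ (g t) * (ξ t)⁻¹)`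
  refine ((hf_lim.comp hg).mul hg_lim).congr' ?_
  filter_upwards [hk] with t ht
  simp only [Function.comp_apply, ← ht]
  group

theorem limit_differences_form_homomorphism_general
    {G : Type*} [Group G] [TopologicalSpace G] [IsTopologicalGroup G] [T2Space G]
    (ξ : ℝ → G) (h : ℝ → ℝ → ℝ) (p : ℝ → G)
    (hcomp : ∀ s l t : ℝ, 0 ≤ t → h s (h l t) = h (s + l) t)
    (hinf : ∀ l : ℝ, Tendsto (h l) atTop atTop)
    (hlim : ∀ s : ℝ, Tendsto (fun t => ξ (h s t) * (ξ t)⁻¹) atTop (𝓝 (p s))) :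
    ∀ s l : ℝ, p (s + l) = p s * p l := by
  intro s l
  have hcomp_eventually : ∀ᶠ t in atTop, h s (h l t) = h (s + l) t :=
    (eventually_ge_atTop 0).mono (hcomp s l)
  exact tendsto_nhds_unique (hlim (s + l))
    (tendsto_mul_inv_comp hcomp_eventually (hinf l) (hlim s) (hlim l))

/-- Let `G` be a Hausdorff topological group, `ξ : [0,∞) → G`, and for each
`s ∈ ℝ` let `h_s : [0,∞) → [0,∞)` satisfy `h_s ∘ h_l = h_{s+l}` and `h_l(t) → ∞` as `t → ∞`.
If for each `s` there is `p(s) ∈ G` with `ξ(h_s(t))·ξ(t)⁻¹ → p(s)` as `t → ∞`, then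
`p(s+l) = p(s)·p(l)` for all `s, l`; i.e. `p : ℝ → G` is a homomorphism from the additive
reals to `G`. -/
theorem limit_differences_form_homomorphism
    {G : Type*} [Group G] [TopologicalSpace G] [IsTopologicalGroup G] [T2Space G]
    (ξ : ℝ → G) (h : ℝ → ℝ → ℝ) (p : ℝ → G)
    (hnonneg : ∀ s t : ℝ, 0 ≤ t → 0 ≤ h s t)
    (hcomp : ∀ s l t : ℝ, 0 ≤ t → h s (h l t) = h (s + l) t)
    (hinf : ∀ l : ℝ, Tendsto (h l) atTop atTop)
    (hlim : ∀ s : ℝ, Tendsto (fun t => ξ (h s t) * (ξ t)⁻¹) atTop (𝓝 (p s))) :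
    ∀ s l : ℝ, p (s + l) = p s * p l :=
  limit_differences_form_homomorphism_general ξ h p hcomp hinf hlim
end

section
/- Let V be a nonzero finite-dimensional ℝ-linear subspace of the space of all functions [0,∞) → ℝ. Assume that every nonzero f ∈ V admits a degree, i.e., there exist r ∈ ℝ and c ≠ 0 such that f(t)/t^r → c as t → ∞. Then V has a basis F₁,…,F_N together with real numbers r₁ < r₂ < ⋯ < r_N and nonzero reals c₁,…,c_N such that F_i(t)/t^{r_i} → c_i as t → ∞ for each i. -/
/-!
Functions with pairwise distinct degrees are linearly independent: divide a vanishing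
combination by the highest power `t ^ r` present and pass to the limit. Hence `V` realizes only
finitely many degrees, and choosing one function of each degree gives a basis: if `g` has degree
`r`, subtracting the right multiple of the chosen function of degree `r` leaves zero or a function
of strictly smaller degree.
-/

open Filter Topology

section Degree

variable {α : Type*} {l : Filter α} {x : α → ℝ}

def HasDegree (l : Filter α) (x : α → ℝ) (f : α → ℝ) (r c : ℝ) : Prop :=
  Tendsto (fun a => f a / x a ^ r) l (𝓝 c)

theorem HasDegree.zero {r : ℝ} : HasDegree l x 0 r 0 := by
  simpa [HasDegree] using tendsto_const_nhds

theorem HasDegree.unique [l.NeBot] {f : α → ℝ} {r c c' : ℝ} (h : HasDegree l x f r c)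
    (h' : HasDegree l x f r c') : c = c' :=
  tendsto_nhds_unique h h'

theorem HasDegree.const_smul {f : α → ℝ} {r c : ℝ} (h : HasDegree l x f r c) (a : ℝ) :
    HasDegree l x (a • f) r (a * c) :=
  (h.const_mul a).congr fun _ => by simp [mul_div_assoc]

theorem HasDegree.sub {f g : α → ℝ} {r c c' : ℝ} (hf : HasDegree l x f r c)
    (hg : HasDegree l x g r c') : HasDegree l x (f - g) r (c - c') :=
  (Tendsto.sub hf hg).congr fun _ => by simp [sub_div]

theorem HasDegree.sum {ι : Type*} {s : Finset ι} {f : ι → α → ℝ} {r : ℝ} {c : ι → ℝ}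
    (h : ∀ i ∈ s, HasDegree l x (f i) r (c i)) :
    HasDegree l x (∑ i ∈ s, f i) r (∑ i ∈ s, c i) :=
  (tendsto_finsetSum s h).congr fun _ => by simp [Finset.sum_div]

theorem HasDegree.zero_of_lt (hx : Tendsto x l atTop) {f : α → ℝ} {r s c : ℝ}
    (h : HasDegree l x f r c) (hrs : r < s) : HasDegree l x f s 0 := by
  have hpow : Tendsto (fun a => x a ^ (r - s)) l (𝓝 0) := by
    simpa [Function.comp_def] using (tendsto_rpow_neg_atTop (sub_pos.2 hrs)).comp hx
  rw [HasDegree, ← mul_zero c]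
  refine (h.mul hpow).congr' ?_
  filter_upwards [hx.eventually_gt_atTop 0] with a ha
  rw [Real.rpow_sub ha]
  field_simp

theorem HasDegree.lt_of_zero [l.NeBot] (hx : Tendsto x l atTop) {f : α → ℝ} {r s c : ℝ}
    (h : HasDegree l x f r c) (hc : c ≠ 0) (h₀ : HasDegree l x f s 0) : r < s := by
  by_contra! hsr
  rcases hsr.eq_or_lt with rfl | hlt
  · exact hc (h.unique h₀)
  · exact hc (h.unique (h₀.zero_of_lt hx hlt))

theorem linearIndependent_of_hasDegree [l.NeBot] (hx : Tendsto x l atTop) {ι : Type*}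
    {f : ι → α → ℝ} {d c : ι → ℝ} (hd : Function.Injective d) (hc : ∀ i, c i ≠ 0)
    (hf : ∀ i, HasDegree l x (f i) (d i) (c i)) : LinearIndependent ℝ f := by
  classical
  rw [linearIndependent_iff]
  intro g hg
  by_contra hne
  obtain ⟨j, hj, hmax⟩ := g.support.exists_max_image d (Finsupp.support_nonempty_iff.2 hne)
  have hsum : HasDegree l x (∑ i ∈ g.support, g i • f i) (d j)
      (∑ i ∈ g.support, if i = j then g j * c j else 0) := by
    refine HasDegree.sum fun i hi => ?_
    split_ifs with hij
    · exact hij ▸ (hf i).const_smul (g i)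
    · have hlt : d i < d j := (hmax i hi).lt_of_ne (hd.ne hij)
      simpa using ((hf i).zero_of_lt hx hlt).const_smul (g i)
  have hzero : ∑ i ∈ g.support, g i • f i = 0 := by
    rw [← hg, Finsupp.linearCombination_apply, Finsupp.sum]
  rw [Finset.sum_ite_eq', if_pos hj, hzero] at hsum
  exact mul_ne_zero (Finsupp.mem_support_iff.1 hj) (hc j) (hsum.unique HasDegree.zero)

theorem Submodule.span_eq_top_of_hasDegree [l.NeBot] (hx : Tendsto x l atTop)
    {V : Submodule ℝ (α → ℝ)} {ι : Type*} [LinearOrder ι] [WellFoundedLT ι] {F : ι → V}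
    {d c : ι → ℝ} (hd : StrictMono d) (hc : ∀ i, c i ≠ 0)
    (hF : ∀ i, HasDegree l x (F i) (d i) (c i))
    (hV : ∀ g : V, g ≠ 0 → ∃ i c, c ≠ 0 ∧ HasDegree l x g (d i) c) :
    Submodule.span ℝ (Set.range F) = ⊤ := by
  suffices key : ∀ i (g : V) (a : ℝ), HasDegree l x g (d i) a →
      g ∈ Submodule.span ℝ (Set.range F) by
    refine Submodule.eq_top_iff'.2 fun g => ?_
    obtain rfl | hg := eq_or_ne g 0
    · exact zero_mem _
    · obtain ⟨i, a, -, hga⟩ := hV g hg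
      exact key i g a hga
  intro i
  induction i using WellFoundedLT.induction with
  | ind i ih =>
    intro g a hga
    set g' := g - (a / c i) • F i
    have hFi : F i ∈ Submodule.span ℝ (Set.range F) := Submodule.subset_span ⟨i, rfl⟩
    have hg : g = g' + (a / c i) • F i := by simp [g']
    rw [hg]
    refine add_mem ?_ (Submodule.smul_mem _ _ hFi)
    by_cases hg'0 : g' = 0
    · rw [hg'0]
      exact zero_mem _
    obtain ⟨i', a', ha', hg'a'⟩ := hV g' hg'0
    have hg'i : HasDegree l x g' (d i) 0 := by
      simpa [g', div_mul_cancel₀ _ (hc i)] using hga.sub ((hF i).const_smul (a / c i))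
    exact ih i' (hd.lt_iff_lt.1 (hg'a'.lt_of_zero hx ha' hg'i)) g' a' hg'a'

end Degree

theorem basis_with_increasing_degrees_general
    (V : Submodule ℝ ({t : ℝ // (0:ℝ) ≤ t} → ℝ))
    (hfin : FiniteDimensional ℝ V)
    (hdeg : ∀ f ∈ V, f ≠ 0 → ∃ r c : ℝ, c ≠ 0 ∧
      Tendsto (fun t : {t : ℝ // (0:ℝ) ≤ t} => f t / (t : ℝ) ^ r) atTop (𝓝 c)) :
    ∃ (N : ℕ) (b : Module.Basis (Fin N) ℝ V) (r : Fin N → ℝ) (c : Fin N → ℝ),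
      StrictMono r ∧ (∀ i, c i ≠ 0) ∧
      ∀ i, Tendsto
        (fun t : {t : ℝ // (0:ℝ) ≤ t} => ((b i : {t : ℝ // (0:ℝ) ≤ t} → ℝ)) t / (t : ℝ) ^ (r i))
        atTop (𝓝 (c i)) := by
  have hx : Tendsto (fun t : {t : ℝ // (0:ℝ) ≤ t} => (t : ℝ)) atTop atTop :=
    tendsto_Ici_atTop.1 tendsto_id
  set D : Set ℝ := {r | ∃ f : V, ∃ c, c ≠ 0 ∧
    HasDegree atTop (fun t : {t : ℝ // (0:ℝ) ≤ t} => (t : ℝ)) f r c}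
  choose F c hc hF using fun r : D => r.2
  have hindep : LinearIndependent ℝ F :=
    (linearIndependent_of_hasDegree hx Subtype.val_injective hc hF).of_comp V.subtype
  have : Finite D := hindep.finite
  have := Fintype.ofFinite D
  set e := monoEquivOfFin D rfl
  have hmono : StrictMono fun i => (e i : ℝ) := fun i j h => e.strictMono h
  have hspan := Submodule.span_eq_top_of_hasDegree hx hmono (fun i => hc (e i)) (fun i => hF (e i))
    fun g hg => by
      obtain ⟨r, a, ha, hga⟩ := hdeg g g.2 (by simpa using hg)
      exact ⟨e.symm ⟨r, g, a, ha, hga⟩, a, ha, by rwa [OrderIso.apply_symm_apply]⟩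
  refine ⟨_, Module.Basis.mk (hindep.comp e e.injective) hspan.ge, _, _, hmono,
    fun i => hc (e i), fun i => ?_⟩
  rw [Module.Basis.mk_apply]
  exact hF (e i)

/-- Let `V` be a nonzero finite-dimensional subspace of the space of all
functions `[0,∞) → ℝ` such that every nonzero `f ∈ V` has a degree: there are `r ∈ ℝ` and
`c ≠ 0` with `f(t)/t^r → c` as `t → ∞`. Then `V` has a basis `F₁,…,F_N` together with real
numbers `r₁ < ⋯ < r_N` and nonzero reals `c₁,…,c_N` such that `F_i(t)/t^{r_i} → c_i` as
`t → ∞` for each `i`. -/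
theorem basis_with_increasing_degrees
    (V : Submodule ℝ ({t : ℝ // (0:ℝ) ≤ t} → ℝ))
    (hV : V ≠ ⊥) (hfin : FiniteDimensional ℝ V)
    (hdeg : ∀ f ∈ V, f ≠ 0 → ∃ r c : ℝ, c ≠ 0 ∧
      Tendsto (fun t : {t : ℝ // (0:ℝ) ≤ t} => f t / (t : ℝ) ^ r) atTop (𝓝 c)) :
    ∃ (N : ℕ) (b : Module.Basis (Fin N) ℝ V) (r : Fin N → ℝ) (c : Fin N → ℝ),
      StrictMono r ∧ (∀ i, c i ≠ 0) ∧
      ∀ i, Tendsto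
        (fun t : {t : ℝ // (0:ℝ) ≤ t} => ((b i : {t : ℝ // (0:ℝ) ≤ t} → ℝ)) t / (t : ℝ) ^ (r i))
        atTop (𝓝 (c i)) :=
  basis_with_increasing_degrees_general V hfin hdeg
end

section
/- Let n ≥ 1 and let f₀,…,f_n, h₁,…,h_n : [0,∞) → ℝ be continuous functions with h_i(t) ≠ 0 for all t and all i. Assume: (1) f₀ = h₁·h₂⋯h_n pointwise; there is c ≠ 0 with f₀(t)/tⁿ → c as t → ∞; and there are reals r₁ ≥ r₂ ≥ ⋯ ≥ r_n > 0 and nonzero reals c₁,…,c_n with h_i(t)/t^{r_i} → c_i as t → ∞ for each i; (2) for every (a₁,…,a_n) ∈ ℝⁿ there exist c > 0 and T ≥ 1 such that |f₀(t) + a₁f₁(t) + ⋯ + a_nf_n(t)| ≥ c·tⁿ for all t ≥ T; (3) for every i ∈ {1,…,n} and every (a_{i+1},…,a_n) ∈ ℝ^{n−i} there exist ε > 0, c > 0 and T ≥ 1 such that |f_i(t) + a_{i+1}f_{i+1}(t) + ⋯ + a_nf_n(t)| ≥ c·t^{n−i+ε} for all t ≥ T. Define φ(t) to be the (n+1)×(n+1)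 real matrix with rows and columns indexed by 0,…,n whose entries are: φ(t)₀₀ = f₀(t), φ(t)₀ⱼ = fⱼ(t) for 1 ≤ j ≤ n, φ(t)ᵢᵢ = hᵢ(t)⁻¹ for 1 ≤ i ≤ n, and all other entries 0. Then for every k with 1 ≤ k ≤ n and every nonzero v in the k-th exterior power ⋀^k ℝ^{n+1}, one has ‖(⋀^k φ(t))·v‖ → ∞ as t → ∞, where ⋀^k φ(t) is the linear map induced by φ(t) on ⋀^k ℝ^{n+1} and ‖·‖ is any fixed norm on the finite-dimensional space ⋀^k ℝ^{n+1}. -/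
/-!
The coordinates of `⋀^k φ(t) v` in the basis `e_K = e_{k₁} ∧ ⋯ ∧ e_{k_k}` are computed through
the dual pairing: `e₀* ∘ φ = ∑ⱼ fⱼ eⱼ*` and `e_l* ∘ φ = h_l⁻¹ e_l*` for `l ≠ 0`, so the coordinate
at `J = {0} ∪ S` is `(∏_{l ∈ S} h_l⁻¹) · ∑ⱼ βⱼ fⱼ` with constants `βⱼ = ± v_{S ∪ {j}}` (`j ∉ S`).
Let `i₀` be the least index occurring in a nonzero coordinate `v_I`, and `S = I \ {i₀}`. Then
`βⱼ = 0` for `j < i₀` and `β_{i₀} ≠ 0`, so condition (2) (if `i₀ = 0`) or (3) bounds `|∑ⱼ βⱼ fⱼ|`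
below by `t^θ`. Comparing degrees in `f₀ = h₁ ⋯ hₙ` gives `∑ r_l = n`, and then monotonicity
gives `∑_{l > i₀} r_l ≤ n - i₀`; hence (using `|S| < n` when `i₀ = 0`) `θ > ∑_{l ∈ S} r_l`,
the rate of decay of `∏_{l ∈ S} h_l⁻¹`. So this coordinate tends to infinity, and on the
finite-dimensional space `⋀^k ℝ^{n+1}` every norm dominates every coordinate.
-/

open Filter Topology Matrix Finset

lemma exists_perm_comp_eq_of_range_eq {α β : Type*} {m e : α → β} (hm : m.Injective)
    (he : e.Injective) (hrange : Set.range m = Set.range e) : ∃ σ : Equiv.Perm α, e ∘ σ = m :=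
  ⟨(Equiv.ofInjective m hm).trans ((Equiv.setCongr hrange).trans (Equiv.ofInjective e he).symm),
    funext fun i => by simp [Equiv.apply_ofInjective_symm]⟩

lemma Set.powersetCard.prod_ofFinEmbEquiv_symm {I M : Type*} [LinearOrder I] [CommMonoid M]
    {k : ℕ} (J : Set.powersetCard I k) (g : I → M) :
    ∏ i, g (ofFinEmbEquiv.symm J i) = ∏ l ∈ J.val, g l := by
  conv_rhs => rw [← map_orderEmbOfFin_univ J.val J.prop, prod_map]
  rfl

lemma Matrix.proj_comp_toLin' {R ι : Type*} [CommRing R] [Fintype ι] [DecidableEq ι]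
    (A : Matrix ι ι R) (l : ι) :
    LinearMap.proj l ∘ₗ toLin' A = ∑ j, A l j • LinearMap.proj j := by
  ext x
  simp [Matrix.toLin'_apply, Matrix.mulVec, dotProduct]

namespace exteriorPower

open Set.powersetCard

variable {R M N : Type*} [CommRing R] [AddCommGroup M] [Module R M] [AddCommGroup N] [Module R N]
  {k : ℕ}

lemma coe_map_apply (f : M →ₗ[R] N) (w : ⋀[R]^k M) :
    (map k f w : ExteriorAlgebra R N) = ExteriorAlgebra.map f w := by
  suffices (⋀[R]^k N).subtype ∘ₗ map k f =
      (ExteriorAlgebra.map f).toLinearMap ∘ₗ (⋀[R]^k M).subtype from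
    LinearMap.congr_fun this w
  refine linearMap_ext ?_
  ext m
  simp [ExteriorAlgebra.map_apply_ιMulti]

lemma pairingDual_ιMulti_map (g : Fin k → Module.Dual R N) (f : M →ₗ[R] N) (w : ⋀[R]^k M) :
    pairingDual R N k (ιMulti R k g) (map k f w) =
      pairingDual R M k (ιMulti R k (fun i => g i ∘ₗ f)) w := by
  suffices pairingDual R N k (ιMulti R k g) ∘ₗ map k f =
      pairingDual R M k (ιMulti R k (fun i => g i ∘ₗ f)) from LinearMap.congr_fun this w
  refine linearMap_ext ?_
  ext m
  simp

lemma exists_pairingDual_ιMulti_coord_eq {I : Type*} [LinearOrder I] (b : Module.Basis I R M)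
    {m : Fin k → I} (hm : m.Injective) {K : Set.powersetCard I k}
    (hK : ∀ x, x ∈ K ↔ x ∈ Set.range m) (w : ⋀[R]^k M) :
    ∃ ε : ℤˣ, pairingDual R M k (ιMulti R k (b.coord ∘ m)) w =
      ε • (b.exteriorPower k).repr w K := by
  set e := ofFinEmbEquiv.symm K
  have hrange : Set.range m = Set.range e := by
    ext x; rw [mem_range_ofFinEmbEquiv_symm_iff_mem, hK]
  obtain ⟨σ, rfl⟩ := exists_perm_comp_eq_of_range_eq hm e.injective hrange
  refine ⟨Equiv.Perm.sign σ, ?_⟩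
  rw [basis_repr_apply, ← Function.comp_assoc, AlternatingMap.map_perm, Units.smul_def,
    map_zsmul, LinearMap.smul_apply]
  rfl

lemma exists_pairingDual_ιMulti_coord_update_eq {I : Type*} [LinearOrder I]
    (b : Module.Basis I R M) {S : Finset I} {x : I} (hx : x ∉ S) {J : Set.powersetCard I k}
    (hJ : J.val = insert x S) {p : Fin k} (hp : ofFinEmbEquiv.symm J p = x) {j : I}
    (hj : j ∉ S) {K : Set.powersetCard I k} (hK : K.val = insert j S) (w : ⋀[R]^k M) :
    ∃ ε : ℤˣ, pairingDual R M k
        (ιMulti R k (b.coord ∘ Function.update (ofFinEmbEquiv.symm J) p j)) w =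
      ε • (b.exteriorPower k).repr w K := by
  classical
  set e := ofFinEmbEquiv.symm J
  have hmemJ : ∀ y, y ∈ Set.range e ↔ y = x ∨ y ∈ S := fun y => by
    rw [mem_range_ofFinEmbEquiv_symm_iff_mem, ← mem_coe_iff, hJ, mem_insert]
  have heS : ∀ i, i ≠ p → e i ∈ S := fun i hi =>
    ((hmemJ (e i)).mp ⟨i, rfl⟩).resolve_left fun h => hi (e.injective (h.trans hp.symm))
  refine exists_pairingDual_ιMulti_coord_eq b (fun a a' h => ?_) (fun y => ?_) w
  · simp only [Function.update_apply] at h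
    split_ifs at h with ha ha' ha'
    · rw [ha, ha']
    · exact absurd (h ▸ heS a' ha') hj
    · exact absurd (h ▸ heS a ha) hj
    · exact e.injective h
  · rw [← mem_coe_iff, hK, mem_insert]
    constructor
    · rintro (rfl | hy)
      · exact ⟨p, Function.update_self _ _ _⟩
      · obtain ⟨i, rfl⟩ := (hmemJ y).mpr (Or.inr hy)
        have hi : i ≠ p := fun hi => hx (by rwa [hi, hp] at hy)
        exact ⟨i, Function.update_of_ne hi _ _⟩
    · rintro ⟨i, rfl⟩
      by_cases hi : i = p
      · exact Or.inl (by rw [hi, Function.update_self])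
      · exact Or.inr (by rw [Function.update_of_ne hi]; exact heS i hi)

lemma repr_map_toLin'_eq {n : ℕ} (w : ⋀[R]^k (Fin (n + 1) → R)) {S : Finset (Fin (n + 1))}
    (hS : 0 ∉ S) {J : Set.powersetCard (Fin (n + 1)) k} (hJ : J.val = insert 0 S) {p : Fin k}
    (hp : ofFinEmbEquiv.symm J p = 0) {A : Matrix (Fin (n + 1)) (Fin (n + 1)) R}
    {f d : Fin (n + 1) → R} (hA : ∀ i j, A i j = if i = 0 then f j else if i = j then d i else 0) :
    ((Pi.basisFun R (Fin (n + 1))).exteriorPower k).repr (map k (toLin' A) w) J =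
      (∏ l ∈ S, d l) * ∑ j, pairingDual R _ k (ιMulti R k ((Pi.basisFun R (Fin (n + 1))).coord ∘
        Function.update (ofFinEmbEquiv.symm J) p j)) w * f j := by
  classical
  set b := Pi.basisFun R (Fin (n + 1))
  set e := ofFinEmbEquiv.symm J
  have he0 : ∀ i, e i = 0 ↔ i = p := fun i => by rw [← hp, e.injective.eq_iff]
  have hcoord : ∀ i, b.coord (e i) ∘ₗ toLin' A = (if e i = 0 then 1 else d (e i)) •
      Function.update (b.coord ∘ e) p (∑ j, f j • b.coord j) i := by
    intro i
    have hb : ∀ l, b.coord l = LinearMap.proj l := fun l => by ext; simp [b]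
    simp only [hb, proj_comp_toLin', hA]
    by_cases hi : e i = 0
    · rw [if_pos hi, one_smul, (he0 i).mp hi, Function.update_self, hp]
      simp
    · rw [if_neg hi, Function.update_of_ne ((he0 i).not.mp hi)]
      simp [hi, hb]
  have hprod : ∏ i, (if e i = 0 then 1 else d (e i)) = ∏ l ∈ S, d l := by
    rw [prod_ofFinEmbEquiv_symm J (fun l => if l = 0 then 1 else d l), hJ, prod_insert hS,
      if_pos rfl, one_mul]
    exact prod_congr rfl fun l hl => if_neg (ne_of_mem_of_not_mem hl hS)
  rw [basis_repr_apply]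
  change pairingDual R _ k (ιMulti R k (b.coord ∘ e)) _ = _
  simp only [pairingDual_ιMulti_map, Function.comp_apply, hcoord, AlternatingMap.map_smul_univ,
    AlternatingMap.map_update_sum, AlternatingMap.map_update_smul, map_smul, map_sum,
    LinearMap.smul_apply, LinearMap.sum_apply, smul_eq_mul, hprod]
  congr 1
  exact sum_congr rfl fun j _ => by rw [Function.comp_update, mul_comm]

end exteriorPower

lemma Finsupp.exists_mem_forall_le_of_ne_zero {ι R : Type*} [LinearOrder ι] [Zero R] {k : ℕ}
    (a : Set.powersetCard ι k →₀ R) (ha : a ≠ 0) (hk : k ≠ 0) :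
    ∃ I, a I ≠ 0 ∧ ∃ i₀ ∈ I, ∀ K, a K ≠ 0 → ∀ x ∈ K, i₀ ≤ x := by
  set U := a.support.biUnion fun K => K.val
  obtain ⟨K, hK⟩ := Finsupp.support_nonempty_iff.mpr ha
  have hU : U.Nonempty := by
    obtain ⟨x, hx⟩ := card_pos.mp (K.prop.trans_gt (Nat.pos_of_ne_zero hk))
    exact ⟨x, mem_biUnion.mpr ⟨K, hK, hx⟩⟩
  obtain ⟨I, hI, hmin⟩ := mem_biUnion.mp (U.min'_mem hU)
  exact ⟨I, Finsupp.mem_support_iff.mp hI, _, hmin, fun K hK x hx =>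
    U.min'_le x (mem_biUnion.mpr ⟨K, Finsupp.mem_support_iff.mpr hK, hx⟩)⟩

lemma forall_lt_eq_zero_and_ne_zero_of_forall_le {ι R : Type*} [LinearOrder ι] [CommRing R]
    {k : ℕ} {a : Set.powersetCard ι k → R} {β : ι → R} {S : Finset ι} {i₀ : ι}
    (hcard : S.card + 1 = k)
    (hβ : ∀ j ∉ S, ∀ K : Set.powersetCard ι k, K.val = insert j S → ∃ ε : ℤˣ, β j = ε • a K)
    (hS : ∀ x ∈ S, i₀ < x) (hmin : ∀ K, a K ≠ 0 → ∀ x ∈ K, i₀ ≤ x)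
    {I : Set.powersetCard ι k} (hI : a I ≠ 0) (hIS : I.val = insert i₀ S) :
    (∀ j < i₀, β j = 0) ∧ β i₀ ≠ 0 := by
  refine ⟨fun j hj => ?_, ?_⟩
  · have hjS : j ∉ S := fun h => lt_asymm hj (hS j h)
    obtain ⟨ε, hε⟩ := hβ j hjS ⟨insert j S, by simp [hjS, hcard]⟩ rfl
    rw [hε, smul_eq_zero_iff_eq]
    by_contra hK
    exact not_le.mpr hj (hmin _ hK j (mem_insert_self j S))
  · obtain ⟨ε, hε⟩ := hβ i₀ (fun h => lt_irrefl _ (hS i₀ h)) I hIS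
    rwa [hε, ne_eq, smul_eq_zero_iff_eq]

lemma exists_repr_map_toLin'_eq_prod_mul_sum {R : Type*} [CommRing R] {n k : ℕ} (hk : k ≠ 0)
    {w : ⋀[R]^k (Fin (n + 1) → R)} (hw : w ≠ 0) :
    ∃ (J : Set.powersetCard (Fin (n + 1)) k) (S : Finset (Fin (n + 1))) (i₀ : Fin (n + 1))
      (β : Fin (n + 1) → R), S.card + 1 = k ∧ S ⊆ Ioi i₀ ∧ (∀ j < i₀, β j = 0) ∧ β i₀ ≠ 0 ∧
      ∀ (A : Matrix (Fin (n + 1)) (Fin (n + 1)) R) (f d : Fin (n + 1) → R),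
        (∀ i j, A i j = if i = 0 then f j else if i = j then d i else 0) →
        ((Pi.basisFun R (Fin (n + 1))).exteriorPower k).repr
          (exteriorPower.map k (toLin' A) w) J = (∏ l ∈ S, d l) * ∑ j, β j * f j := by
  obtain ⟨I, hI, i₀, hi₀I, hi₀min⟩ := Finsupp.exists_mem_forall_le_of_ne_zero _
    ((((Pi.basisFun R (Fin (n + 1))).exteriorPower k).repr.map_ne_zero_iff).mpr hw) hk
  set S := I.val.erase i₀
  have hSgt : ∀ x ∈ S, i₀ < x := fun x hx =>
    lt_of_le_of_ne (hi₀min I hI x (mem_of_mem_erase hx)) (ne_of_mem_erase hx).symm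
  have hS0 : 0 ∉ S := fun h0 => not_lt_of_ge (Fin.zero_le i₀) (hSgt 0 h0)
  have hcard : S.card + 1 = k := by rw [card_erase_of_mem hi₀I, I.prop]; omega
  let J : Set.powersetCard (Fin (n + 1)) k := ⟨insert 0 S, by simp [hS0, hcard]⟩
  obtain ⟨p, hp⟩ := (Set.powersetCard.mem_range_ofFinEmbEquiv_symm_iff_mem J 0).mpr
    (Set.powersetCard.mem_coe_iff.mp (mem_insert_self 0 S))
  obtain ⟨hβlt, hβi₀⟩ := forall_lt_eq_zero_and_ne_zero_of_forall_le hcard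
    (fun j hj K hK => exteriorPower.exists_pairingDual_ιMulti_coord_update_eq _ hS0 rfl hp hj hK w)
    hSgt hi₀min hI (insert_erase hi₀I).symm
  exact ⟨J, S, i₀, _, hcard, fun x hx => mem_Ioi.mpr (hSgt x hx), hβlt, hβi₀,
    fun A f d hA => exteriorPower.repr_map_toLin'_eq w hS0 rfl hp hA⟩

lemma LinearMap.exists_abs_le_mul_of_norm {E : Type*} [AddCommGroup E] [Module ℝ E]
    [FiniteDimensional ℝ E] (p : E → ℝ) (hadd : ∀ x y, p (x + y) ≤ p x + p y)
    (hsmul : ∀ (a : ℝ) x, p (a • x) = |a| * p x) (hzero : ∀ x, p x = 0 → x = 0)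
    (ℓ : E →ₗ[ℝ] ℝ) : ∃ C, 0 < C ∧ ∀ x, |ℓ x| ≤ C * p x := by
  let q : AddGroupNorm E :=
    { toFun := p
      map_zero' := by simpa using hsmul 0 0
      add_le' := hadd
      neg' := fun x => by simpa using hsmul (-1) x
      eq_zero_of_map_eq_zero' := hzero }
  let : NormedAddCommGroup E := q.toNormedAddCommGroup
  let : NormedSpace ℝ E := ⟨fun a x => (hsmul a x).le⟩
  let ℓc := LinearMap.toContinuousLinearMap ℓ
  refine ⟨‖ℓc‖ + 1, by positivity, fun x => ?_⟩
  calc |ℓ x| = ‖ℓc x‖ := rfl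
    _ ≤ ‖ℓc‖ * ‖x‖ := ℓc.le_opNorm x
    _ ≤ (‖ℓc‖ + 1) * ‖x‖ := by gcongr; linarith
    _ = (‖ℓc‖ + 1) * p x := rfl

lemma Real.rpow_exponent_eq_zero_of_tendsto {x L : ℝ} (hL : L ≠ 0)
    (h : Tendsto (fun t : ℝ => t ^ x) atTop (𝓝 L)) : x = 0 := by
  rcases lt_trichotomy x 0 with hx | hx | hx
  · refine absurd (tendsto_nhds_unique h ?_) hL
    simpa using tendsto_rpow_neg_atTop (neg_pos.mpr hx)
  · exact hx
  · exact absurd h (not_tendsto_nhds_of_tendsto_atTop (tendsto_rpow_atTop hx) L)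

lemma Real.eq_of_tendsto_div_rpow {g : ℝ → ℝ} {a b ca cb : ℝ} (hca : ca ≠ 0) (hcb : cb ≠ 0)
    (ha : Tendsto (fun t => g t / t ^ a) atTop (𝓝 ca))
    (hb : Tendsto (fun t => g t / t ^ b) atTop (𝓝 cb)) : a = b := by
  have hratio : (fun t => (g t / t ^ b) / (g t / t ^ a)) =ᶠ[atTop] fun t => t ^ (a - b) := by
    filter_upwards [ha.eventually_ne hca, eventually_gt_atTop 0] with t hg ht
    have hg' : g t ≠ 0 := fun h => hg (by simp [h])
    rw [Real.rpow_sub ht]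
    field_simp
  have := rpow_exponent_eq_zero_of_tendsto (div_ne_zero hcb hca) ((hb.div ha hca).congr' hratio)
  linarith

lemma sum_eq_of_tendsto_div_rpow_prod {ι : Type*} (S : Finset ι) {g : ℝ → ℝ}
    {h : ι → ℝ → ℝ} {r c : ι → ℝ} {a ca : ℝ} (hca : ca ≠ 0)
    (hg : Tendsto (fun t => g t / t ^ a) atTop (𝓝 ca)) (hprod : ∀ t, 0 ≤ t → g t = ∏ l ∈ S, h l t)
    (hc : ∀ l ∈ S, c l ≠ 0) (hh : ∀ l ∈ S, Tendsto (fun t => h l t / t ^ r l) atTop (𝓝 (c l))) :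
    ∑ l ∈ S, r l = a := by
  refine Real.eq_of_tendsto_div_rpow (prod_ne_zero_iff.mpr hc) hca
    ((tendsto_finsetProd S hh).congr' ?_) hg
  filter_upwards [eventually_gt_atTop 0] with t ht
  rw [hprod t ht.le, Real.rpow_sum_of_pos ht, prod_div_distrib]

lemma tendsto_abs_prod_inv_mul_atTop {ι : Type*} (S : Finset ι) {h : ι → ℝ → ℝ} {r c : ι → ℝ}
    (hc : ∀ l ∈ S, c l ≠ 0) (hh : ∀ l ∈ S, Tendsto (fun t => h l t / t ^ r l) atTop (𝓝 (c l)))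
    {W : ℝ → ℝ} {θ c₀ : ℝ} (hc₀ : 0 < c₀) (hθ : ∑ l ∈ S, r l < θ)
    (hW : ∀ᶠ t in atTop, c₀ * t ^ θ ≤ |W t|) :
    Tendsto (fun t => |(∏ l ∈ S, (h l t)⁻¹) * W t|) atTop atTop := by
  set u : ℝ → ℝ := fun t => ∏ l ∈ S, h l t / t ^ r l
  have hC : ∏ l ∈ S, c l ≠ 0 := prod_ne_zero_iff.mpr hc
  have hu : Tendsto (fun t => |u t|⁻¹ * c₀) atTop (𝓝 (|∏ l ∈ S, c l|⁻¹ * c₀)) :=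
    ((tendsto_finsetProd S hh).abs.inv₀ (abs_ne_zero.mpr hC)).mul_const c₀
  have hlow : Tendsto (fun t => |u t|⁻¹ * c₀ * t ^ (θ - ∑ l ∈ S, r l)) atTop atTop :=
    hu.pos_mul_atTop (by positivity) (tendsto_rpow_atTop (by linarith))
  refine tendsto_atTop_mono' atTop ?_ hlow
  filter_upwards [hW, eventually_gt_atTop 0] with t hWt ht
  have hprod : ∏ l ∈ S, (h l t)⁻¹ = (u t)⁻¹ * (t ^ ∑ l ∈ S, r l)⁻¹ := by
    simp only [u, Real.rpow_sum_of_pos ht, ← prod_inv_distrib, ← prod_mul_distrib]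
    refine prod_congr rfl fun l _ => ?_
    have : t ^ r l ≠ 0 := (Real.rpow_pos_of_pos ht _).ne'
    field_simp
  rw [hprod, abs_mul, abs_mul, abs_inv, abs_inv, abs_of_pos (Real.rpow_pos_of_pos ht _),
    Real.rpow_sub ht]
  calc |u t|⁻¹ * c₀ * (t ^ θ / t ^ ∑ l ∈ S, r l)
      = |u t|⁻¹ * (t ^ ∑ l ∈ S, r l)⁻¹ * (c₀ * t ^ θ) := by ring
    _ ≤ |u t|⁻¹ * (t ^ ∑ l ∈ S, r l)⁻¹ * |W t| := by gcongr

lemma Fin.Ioi_zero_eq_univ_erase {n : ℕ} : Ioi (0 : Fin (n + 1)) = univ.erase 0 := by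
  ext; simp

lemma Fin.sum_Ioi_le_sub_of_antitoneOn {n : ℕ} {r : Fin (n + 1) → ℝ}
    (hr : AntitoneOn r (Set.Ioi 0)) (hsum : ∑ l ∈ Ioi 0, r l = n) {i : Fin (n + 1)}
    (hi : i ≠ 0) : ∑ l ∈ Ioi i, r l ≤ n - i := by
  have hi0 : (0 : Fin (n + 1)) < i := Fin.pos_iff_ne_zero.mpr hi
  have hsplit : ∑ l ∈ Ioc 0 i, r l + ∑ l ∈ Ioi i, r l = n := by
    rw [← hsum, ← sum_filter_add_sum_filter_not (Ioi 0) (· ≤ i)]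
    congr 2 <;> ext l <;> simp only [mem_filter, mem_Ioi, mem_Ioc, not_le]
    exact ⟨fun h => ⟨hi0.trans h, h⟩, And.right⟩
  have hcardIoi : ((#(Ioi i) : ℕ) : ℝ) = n - i := by
    rw [Fin.card_Ioi, Nat.add_sub_cancel, Nat.cast_sub (Fin.is_le i)]
  have hcardIoc : ((#(Ioc 0 i) : ℕ) : ℝ) = i := by
    rw [Fin.card_Ioc]; simp
  rcases le_or_gt (r i) 1 with hri | hri
  · calc ∑ l ∈ Ioi i, r l ≤ ∑ _l ∈ Ioi i, (1 : ℝ) := by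
          refine sum_le_sum fun l hl => le_trans ?_ hri
          exact hr (Set.mem_Ioi.mpr hi0) (Set.mem_Ioi.mpr (hi0.trans (mem_Ioi.mp hl)))
            (mem_Ioi.mp hl).le
      _ = n - i := by rw [Finset.sum_const, nsmul_one, hcardIoi]
  · have : (i : ℝ) ≤ ∑ l ∈ Ioc 0 i, r l := by
      calc (i : ℝ) = ∑ _l ∈ Ioc 0 i, (1 : ℝ) := by rw [Finset.sum_const, nsmul_one, hcardIoc]
        _ ≤ ∑ l ∈ Ioc 0 i, r l := by
          refine sum_le_sum fun l hl => hri.le.trans ?_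
          exact hr (Set.mem_Ioi.mpr (mem_Ioc.mp hl).1) (Set.mem_Ioi.mpr hi0) (mem_Ioc.mp hl).2
    linarith

lemma sum_mul_eq_mul_add_sum_filter_lt {ι K : Type*} [Fintype ι] [LinearOrder ι] [Field K]
    {b g : ι → K} {i : ι} (hlt : ∀ j < i, b j = 0) (hi : b i ≠ 0) :
    ∑ j, b j * g j = b i * (g i + ∑ j ∈ univ.filter (i < ·), b j / b i * g j) := by
  have hsupp : ∑ j, b j * g j = ∑ j ∈ insert i (univ.filter (i < ·)), b j * g j := by
    refine (sum_subset (subset_univ _) fun j _ hj => ?_).symm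
    simp only [mem_insert, mem_filter, mem_univ, true_and, not_or] at hj
    rw [hlt j (lt_of_le_of_ne (not_lt.mp hj.2) hj.1), zero_mul]
  rw [hsupp, sum_insert (by simp), mul_add, mul_sum]
  congr 1
  exact sum_congr rfl fun j _ => by field_simp

lemma exists_rpow_le_abs_sum_mul {n : ℕ} {f : Fin (n + 1) → ℝ → ℝ} {r : Fin (n + 1) → ℝ}
    (hr_mono : AntitoneOn r (Set.Ioi 0)) (hr_pos : ∀ i : Fin (n + 1), i ≠ 0 → 0 < r i)
    (hsum : ∑ l ∈ Ioi 0, r l = n)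
    (hcond2 : ∀ a : Fin (n + 1) → ℝ, ∃ c₀ : ℝ, 0 < c₀ ∧ ∃ T : ℝ, 1 ≤ T ∧
      ∀ t : ℝ, T ≤ t →
        c₀ * t ^ n ≤ |f 0 t + ∑ i ∈ Finset.univ.erase (0 : Fin (n + 1)), a i * f i t|)
    (hcond3 : ∀ i : Fin (n + 1), i ≠ 0 → ∀ a : Fin (n + 1) → ℝ,
      ∃ ε : ℝ, 0 < ε ∧ ∃ c₀ : ℝ, 0 < c₀ ∧ ∃ T : ℝ, 1 ≤ T ∧
        ∀ t : ℝ, T ≤ t →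
          c₀ * t ^ ((n : ℝ) - (i : ℕ) + ε) ≤
            |f i t + ∑ j ∈ Finset.univ.filter (fun j : Fin (n + 1) => i < j), a j * f j t|)
    {S : Finset (Fin (n + 1))} {i₀ : Fin (n + 1)} {β : Fin (n + 1) → ℝ} (hS : S ⊆ Ioi i₀)
    (hSn : S.card < n) (hβlt : ∀ j < i₀, β j = 0) (hβi₀ : β i₀ ≠ 0) :
    ∃ θ c₀, ∑ l ∈ S, r l < θ ∧ 0 < c₀ ∧ ∀ᶠ t in atTop, c₀ * t ^ θ ≤ |∑ j, β j * f j t| := by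
  have hr_nonneg : ∀ i, ∀ j ∈ Ioi i, 0 ≤ r j := fun i j hj =>
    (hr_pos j ((Fin.zero_le i).trans_lt (mem_Ioi.mp hj)).ne').le
  rcases eq_or_ne i₀ 0 with rfl | hi₀
  · obtain ⟨c₀, hc₀, T, -, hT⟩ := hcond2 (fun j => β j / β 0)
    obtain ⟨x, hx, hxS⟩ := exists_mem_notMem_of_card_lt_card (s := S) (t := Ioi 0)
      (by rw [Fin.card_Ioi, Fin.val_zero]; omega)
    refine ⟨n, |β 0| * c₀, hsum ▸ sum_lt_sum_of_subset hS hx hxS (hr_pos x (mem_Ioi.mp hx).ne')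
      (fun j hj _ => hr_nonneg 0 j hj), by positivity, eventually_atTop.mpr ⟨T, fun t ht => ?_⟩⟩
    rw [sum_mul_eq_mul_add_sum_filter_lt hβlt hβi₀, abs_mul, mul_assoc, Real.rpow_natCast,
      filter_lt_eq_Ioi, Fin.Ioi_zero_eq_univ_erase]
    exact mul_le_mul_of_nonneg_left (hT t ht) (abs_nonneg _)
  · obtain ⟨ε, hε, c₀, hc₀, T, -, hT⟩ := hcond3 i₀ hi₀ (fun j => β j / β i₀)
    refine ⟨n - i₀ + ε, |β i₀| * c₀, ?_, by positivity, eventually_atTop.mpr ⟨T, fun t ht => ?_⟩⟩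
    · have := sum_le_sum_of_subset_of_nonneg hS fun j hj _ => hr_nonneg i₀ j hj
      have := Fin.sum_Ioi_le_sub_of_antitoneOn hr_mono hsum hi₀
      linarith
    · rw [sum_mul_eq_mul_add_sum_filter_lt hβlt hβi₀, abs_mul, mul_assoc]
      exact mul_le_mul_of_nonneg_left (hT t ht) (abs_nonneg _)

theorem exterior_powers_diverge_general
    (n : ℕ)
    (f h : Fin (n + 1) → ℝ → ℝ)
    -- condition (1): `f₀ = h₁⋯h_n`, `deg f₀ = n`, and `deg h₁ ≥ ⋯ ≥ deg h_n > 0`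
    (hprod : ∀ t : ℝ, 0 ≤ t →
      f 0 t = ∏ i ∈ Finset.univ.erase (0 : Fin (n + 1)), h i t)
    (hf0deg : ∃ c : ℝ, c ≠ 0 ∧
      Tendsto (fun t : ℝ => f 0 t / t ^ n) atTop (𝓝 c))
    (r c : Fin (n + 1) → ℝ)
    (hr_mono : ∀ i j : Fin (n + 1), i ≠ 0 → j ≠ 0 → i ≤ j → r j ≤ r i)
    (hr_pos : ∀ i : Fin (n + 1), i ≠ 0 → 0 < r i)
    (hh_deg : ∀ i : Fin (n + 1), i ≠ 0 → c i ≠ 0 ∧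
      Tendsto (fun t : ℝ => h i t / t ^ (r i)) atTop (𝓝 (c i)))
    -- condition (2): `deg (f₀ + g) ≥ n` for `g` in the span of `f₁,…,f_n`
    (hcond2 : ∀ a : Fin (n + 1) → ℝ, ∃ c₀ : ℝ, 0 < c₀ ∧ ∃ T : ℝ, 1 ≤ T ∧
      ∀ t : ℝ, T ≤ t →
        c₀ * t ^ n ≤ |f 0 t + ∑ i ∈ Finset.univ.erase (0 : Fin (n + 1)), a i * f i t|)
    -- condition (3): `deg (f_i + g) > n − i` for `g` in the span of `f_{i+1},…,f_n`
    (hcond3 : ∀ i : Fin (n + 1), i ≠ 0 → ∀ a : Fin (n + 1) → ℝ,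
      ∃ ε : ℝ, 0 < ε ∧ ∃ c₀ : ℝ, 0 < c₀ ∧ ∃ T : ℝ, 1 ≤ T ∧
        ∀ t : ℝ, T ≤ t →
          c₀ * t ^ ((n : ℝ) - (i : ℕ) + ε) ≤
            |f i t + ∑ j ∈ Finset.univ.filter (fun j : Fin (n + 1) => i < j), a j * f j t|)
    (φ : ℝ → Matrix (Fin (n + 1)) (Fin (n + 1)) ℝ)
    (hφ : ∀ t : ℝ, ∀ i j : Fin (n + 1),
      φ t i j = if i = 0 then f j t else if i = j then (h i t)⁻¹ else 0) :
    ∀ k : ℕ, 1 ≤ k → k ≤ n →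
      ∀ v : ExteriorAlgebra ℝ (Fin (n + 1) → ℝ),
        v ∈ ⋀[ℝ]^k (Fin (n + 1) → ℝ) → v ≠ 0 →
        ∀ Nm : ExteriorAlgebra ℝ (Fin (n + 1) → ℝ) → ℝ,
          (∀ x y : ExteriorAlgebra ℝ (Fin (n + 1) → ℝ),
            x ∈ ⋀[ℝ]^k (Fin (n + 1) → ℝ) → y ∈ ⋀[ℝ]^k (Fin (n + 1) → ℝ) →
              Nm (x + y) ≤ Nm x + Nm y) →
          (∀ (a : ℝ) (x : ExteriorAlgebra ℝ (Fin (n + 1) → ℝ)),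
            x ∈ ⋀[ℝ]^k (Fin (n + 1) → ℝ) → Nm (a • x) = |a| * Nm x) →
          (∀ x ∈ ⋀[ℝ]^k (Fin (n + 1) → ℝ), (Nm x = 0 ↔ x = 0)) →
          Tendsto
            (fun t : ℝ => Nm (ExteriorAlgebra.map (Matrix.toLin' (φ t)) v))
            atTop atTop := by
  intro k hk1 hkn v hv hv0 Nm hadd hsmul hzero
  have hsum : ∑ l ∈ Ioi 0, r l = n := by
    obtain ⟨c₀, hc₀, hlim⟩ := hf0deg
    rw [Fin.Ioi_zero_eq_univ_erase]
    exact sum_eq_of_tendsto_div_rpow_prod _ hc₀ (by simpa only [Real.rpow_natCast] using hlim)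
      hprod (fun l hl => (hh_deg l (ne_of_mem_erase hl)).1)
      (fun l hl => (hh_deg l (ne_of_mem_erase hl)).2)
  obtain ⟨J, S, i₀, β, hcard, hS, hβlt, hβi₀, hcoeff⟩ :=
    exists_repr_map_toLin'_eq_prod_mul_sum (by omega) (w := ⟨v, hv⟩)
      fun h0 => hv0 (congrArg Subtype.val h0)
  obtain ⟨θ, c₀, hθ, hc₀, hW⟩ := exists_rpow_le_abs_sum_mul
    (fun a ha b hb hab => hr_mono a b ha.ne' hb.ne' hab) hr_pos hsum hcond2 hcond3 hS
    (by omega) hβlt hβi₀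
  have hS0 : ∀ l ∈ S, l ≠ 0 := fun l hl => ((Fin.zero_le i₀).trans_lt (mem_Ioi.mp (hS hl))).ne'
  have hJ := tendsto_abs_prod_inv_mul_atTop S (fun l hl => (hh_deg l (hS0 l hl)).1)
    (fun l hl => (hh_deg l (hS0 l hl)).2) hc₀ hθ hW
  obtain ⟨C, hC, hle⟩ := LinearMap.exists_abs_le_mul_of_norm (fun x : ⋀[ℝ]^k _ => Nm x)
    (fun x y => hadd x y x.2 y.2) (fun a x => hsmul a x x.2)
    (fun x hx => Subtype.ext ((hzero x x.2).mp hx))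
    (((Pi.basisFun ℝ (Fin (n + 1))).exteriorPower k).coord J)
  refine tendsto_atTop_mono (fun t => ?_) (hJ.const_mul_atTop (inv_pos.mpr hC))
  rw [inv_mul_le_iff₀ hC, ← hcoeff _ _ _ (hφ t)]
  exact (hle _).trans_eq (by rw [exteriorPower.coe_map_apply])

/-- For the curve `φ(t)` in `SL(n+1,ℝ)` whose top row is
`(f₀(t), f₁(t), …, f_n(t))` and whose remaining diagonal entries are `h₁(t)⁻¹,…,h_n(t)⁻¹`
(zero elsewhere), under the degree conditions (1)–(3), for every `1 ≤ k ≤ n` and every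
nonzero `v` in the `k`-th exterior power `⋀^k ℝ^{n+1}`, one has `‖(⋀^k φ(t))·v‖ → ∞`
as `t → ∞`, for any fixed norm `‖·‖` on `⋀^k ℝ^{n+1}`. -/
theorem exterior_powers_diverge
    (n : ℕ) (hn : 1 ≤ n)
    (f h : Fin (n + 1) → ℝ → ℝ)
    (hf_cont : ∀ j, ContinuousOn (f j) (Set.Ici (0:ℝ)))
    (hh_cont : ∀ i : Fin (n + 1), i ≠ 0 → ContinuousOn (h i) (Set.Ici (0:ℝ)))
    (hh_ne : ∀ i : Fin (n + 1), i ≠ 0 → ∀ t : ℝ, 0 ≤ t → h i t ≠ 0)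
    -- condition (1): `f₀ = h₁⋯h_n`, `deg f₀ = n`, and `deg h₁ ≥ ⋯ ≥ deg h_n > 0`
    (hprod : ∀ t : ℝ, 0 ≤ t →
      f 0 t = ∏ i ∈ Finset.univ.erase (0 : Fin (n + 1)), h i t)
    (hf0deg : ∃ c : ℝ, c ≠ 0 ∧
      Tendsto (fun t : ℝ => f 0 t / t ^ n) atTop (𝓝 c))
    (r c : Fin (n + 1) → ℝ)
    (hr_mono : ∀ i j : Fin (n + 1), i ≠ 0 → j ≠ 0 → i ≤ j → r j ≤ r i)
    (hr_pos : ∀ i : Fin (n + 1), i ≠ 0 → 0 < r i)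
    (hh_deg : ∀ i : Fin (n + 1), i ≠ 0 → c i ≠ 0 ∧
      Tendsto (fun t : ℝ => h i t / t ^ (r i)) atTop (𝓝 (c i)))
    -- condition (2): `deg (f₀ + g) ≥ n` for `g` in the span of `f₁,…,f_n`
    (hcond2 : ∀ a : Fin (n + 1) → ℝ, ∃ c₀ : ℝ, 0 < c₀ ∧ ∃ T : ℝ, 1 ≤ T ∧
      ∀ t : ℝ, T ≤ t →
        c₀ * t ^ n ≤ |f 0 t + ∑ i ∈ Finset.univ.erase (0 : Fin (n + 1)), a i * f i t|)
    -- condition (3): `deg (f_i + g) > n − i` for `g` in the span of `f_{i+1},…,f_n`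
    (hcond3 : ∀ i : Fin (n + 1), i ≠ 0 → ∀ a : Fin (n + 1) → ℝ,
      ∃ ε : ℝ, 0 < ε ∧ ∃ c₀ : ℝ, 0 < c₀ ∧ ∃ T : ℝ, 1 ≤ T ∧
        ∀ t : ℝ, T ≤ t →
          c₀ * t ^ ((n : ℝ) - (i : ℕ) + ε) ≤
            |f i t + ∑ j ∈ Finset.univ.filter (fun j : Fin (n + 1) => i < j), a j * f j t|)
    (φ : ℝ → Matrix (Fin (n + 1)) (Fin (n + 1)) ℝ)
    (hφ : ∀ t : ℝ, ∀ i j : Fin (n + 1),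
      φ t i j = if i = 0 then f j t else if i = j then (h i t)⁻¹ else 0) :
    ∀ k : ℕ, 1 ≤ k → k ≤ n →
      ∀ v : ExteriorAlgebra ℝ (Fin (n + 1) → ℝ),
        v ∈ ⋀[ℝ]^k (Fin (n + 1) → ℝ) → v ≠ 0 →
        ∀ Nm : ExteriorAlgebra ℝ (Fin (n + 1) → ℝ) → ℝ,
          (∀ x y : ExteriorAlgebra ℝ (Fin (n + 1) → ℝ),
            x ∈ ⋀[ℝ]^k (Fin (n + 1) → ℝ) → y ∈ ⋀[ℝ]^k (Fin (n + 1) → ℝ) →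
              Nm (x + y) ≤ Nm x + Nm y) →
          (∀ (a : ℝ) (x : ExteriorAlgebra ℝ (Fin (n + 1) → ℝ)),
            x ∈ ⋀[ℝ]^k (Fin (n + 1) → ℝ) → Nm (a • x) = |a| * Nm x) →
          (∀ x ∈ ⋀[ℝ]^k (Fin (n + 1) → ℝ), (Nm x = 0 ↔ x = 0)) →
          Tendsto
            (fun t : ℝ => Nm (ExteriorAlgebra.map (Matrix.toLin' (φ t)) v))
            atTop atTop :=
  exterior_powers_diverge_general n f h hprod hf0deg r c hr_mono hr_pos hh_deg hcond2 hcond3 φ hφ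
end

section
/- The averages A(T) := (1/T)·∫₀^T cos(2π·log(1+t)) dt do not converge as T → ∞; that is, there is no real number L with A(T) → L as T → ∞. -/
open Filter Topology Real

/-!
The function `u (cos (c log u) + c sin (c log u)) / (1 + c²)` is a primitive of `cos (c log u)`,
so at `T = exp x - 1` the average equals
`(exp x (cos (c x) + c sin (c x)) - 1) / (1 + c²) / (exp x - 1)`.
For `c = 2π` this is exactly `1 / (1 + c²) > 0` along `x = n + 1`, while along `x = n + 1/2` the
cosine is `-1`, the sine vanishes and the average is negative; so no limit exists.
-/

noncomputable def cosLogPrimitive (c u : ℝ) : ℝ :=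
  u * (cos (c * log u) + c * sin (c * log u)) / (1 + c ^ 2)

noncomputable def cosLogAverage (c T : ℝ) : ℝ :=
  (1 / T) * ∫ t in (0:ℝ)..T, cos (c * log (1 + t))

lemma hasDerivAt_cosLogPrimitive (c : ℝ) {u : ℝ} (hu : 0 < u) :
    HasDerivAt (cosLogPrimitive c) (cos (c * log u)) u := by
  have hlog : HasDerivAt (fun u => c * log u) (c * u⁻¹) u :=
    (hasDerivAt_log hu.ne').const_mul c
  have h := ((hasDerivAt_id u).mul
    (((hasDerivAt_cos _).comp u hlog).add (((hasDerivAt_sin _).comp u hlog).const_mul c))).div_const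
    (1 + c ^ 2)
  refine h.congr_deriv ?_
  have : 1 + c ^ 2 ≠ 0 := by positivity
  simp only [Function.comp_def, id, Pi.add_apply]
  field_simp
  ring

lemma integral_cos_mul_log {c a b : ℝ} (ha : 0 < a) (hb : 0 < b) :
    ∫ u in a..b, cos (c * log u) = cosLogPrimitive c b - cosLogPrimitive c a := by
  have hpos : ∀ u ∈ Set.uIcc a b, 0 < u := fun u hu =>
    lt_of_lt_of_le (lt_min ha hb) hu.1
  refine intervalIntegral.integral_eq_sub_of_hasDerivAt
    (fun u hu => hasDerivAt_cosLogPrimitive c (hpos u hu)) (ContinuousOn.intervalIntegrable ?_)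
  exact continuous_cos.comp_continuousOn
    (continuousOn_const.mul (continuousOn_log.mono fun u hu => (hpos u hu).ne'))

lemma cosLogPrimitive_exp (c x : ℝ) :
    cosLogPrimitive c (exp x) = exp x * (cos (c * x) + c * sin (c * x)) / (1 + c ^ 2) := by
  rw [cosLogPrimitive, log_exp]

lemma cosLogAverage_exp_sub_one (c x : ℝ) :
    cosLogAverage c (exp x - 1) =
      (exp x * (cos (c * x) + c * sin (c * x)) - 1) / (1 + c ^ 2) / (exp x - 1) := by
  have hint : ∫ t in (0:ℝ)..(exp x - 1), cos (c * log (1 + t)) =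
      cosLogPrimitive c (exp x) - cosLogPrimitive c 1 := by
    rw [intervalIntegral.integral_comp_add_left (fun u => cos (c * log u)),
      integral_cos_mul_log (by norm_num) (by simpa using exp_pos x)]
    norm_num
  rw [cosLogAverage, hint, cosLogPrimitive_exp, cosLogPrimitive, log_one]
  simp only [mul_zero, cos_zero, sin_zero]
  ring

lemma cosLogAverage_two_pi_exp_nat_add_one (n : ℕ) :
    cosLogAverage (2 * π) (exp (n + 1) - 1) = 1 / (1 + (2 * π) ^ 2) := by
  have hcos : cos (2 * π * (n + 1)) = 1 := by
    simpa [mul_comm] using cos_nat_mul_two_pi (n + 1)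
  have hsin : sin (2 * π * (n + 1)) = 0 := by
    convert sin_nat_mul_pi (2 * n + 2) using 2
    push_cast
    ring
  have hne : exp ((n : ℝ) + 1) - 1 ≠ 0 :=
    sub_ne_zero.mpr (one_lt_exp_iff.mpr (by positivity)).ne'
  rw [cosLogAverage_exp_sub_one, hcos, hsin]
  field_simp
  ring

lemma cosLogAverage_two_pi_exp_nat_add_half_neg (n : ℕ) :
    cosLogAverage (2 * π) (exp (n + 1 / 2) - 1) < 0 := by
  have hcos : cos (2 * π * (n + 1 / 2)) = -1 := by
    simpa [mul_add, mul_comm] using cos_nat_mul_two_pi_add_pi n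
  have hsin : sin (2 * π * (n + 1 / 2)) = 0 := by
    convert sin_nat_mul_pi (2 * n + 1) using 2
    push_cast
    ring
  have hgt : 1 < exp ((n : ℝ) + 1 / 2) := one_lt_exp_iff.mpr (by positivity)
  rw [cosLogAverage_exp_sub_one, hcos, hsin]
  refine div_neg_of_neg_of_pos (div_neg_of_neg_of_pos ?_ (by positivity)) (by linarith)
  linarith

lemma tendsto_exp_nat_add_sub_one (a : ℝ) :
    Tendsto (fun n : ℕ => exp (n + a) - 1) atTop atTop :=
  tendsto_atTop_add_const_right _ _ <| tendsto_exp_atTop.comp <|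
    tendsto_atTop_add_const_right _ a tendsto_natCast_atTop_atTop

/-- The averages `A(T) = (1/T)·∫₀^T cos(2π·log(1+t)) dt` do not converge
as `T → ∞`. -/
theorem log_averages_do_not_converge :
    ¬ ∃ L : ℝ,
      Tendsto (fun T : ℝ =>
          (1 / T) * ∫ t in (0:ℝ)..T, Real.cos (2 * Real.pi * Real.log (1 + t)))
        atTop (𝓝 L) := by
  rintro ⟨L, hL⟩
  change Tendsto (cosLogAverage (2 * π)) atTop (𝓝 L) at hL
  have hL_eq : L = 1 / (1 + (2 * π) ^ 2) := by
    refine tendsto_nhds_unique (hL.comp (tendsto_exp_nat_add_sub_one 1)) ?_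
    simp only [Function.comp_def, cosLogAverage_two_pi_exp_nat_add_one, tendsto_const_nhds]
  have hL_nonpos : L ≤ 0 := le_of_tendsto' (hL.comp (tendsto_exp_nat_add_sub_one (1 / 2)))
    fun n => (cosLogAverage_two_pi_exp_nat_add_half_neg n).le
  have : 0 < 1 / (1 + (2 * π) ^ 2) := by positivity
  linarith
end

section
/- Let m ≥ 1, let ψ : [0,∞) → GL(m,ℝ) be continuous, let Q : ℝ^m → ℝ be a nonzero polynomial, and set V := {x ∈ ℝ^m : Q(x) = 0}. Suppose there exist T₀ > 0, C > 0, α > 0 such that: (a) for every v ∈ ℝ^m, the function t ↦ ‖ψ(t)v‖ is (C,α)-good on [T₀,∞); (b) for every v ∈ ℝ^m, every interval [x,y] ⊆ [T₀,∞) with |Q(ψ(t)v)| ≤ |Q(ψ(y)v)| for all t ∈ [x,y] and |Q(ψ(y)v)| > 0, and every η > 0, one has |{t ∈ [x,y] : |Q(ψ(t)v)| ≤ η}| ≤ C·(η/|Q(ψ(y)v)|)^α·(y−x); (c) for every v ∈ ℝ^m and every c > 0, the function t ↦ |Q(ψ(t)v)| attains the value c at only finitely many points in each bounded subinterval of [T₀,∞).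 Then for every ε > 0 and every compact set K₁ ⊆ V there exists a compact set K₂ with K₁ ⊆ K₂ ⊆ V such that: for every compact neighborhood Φ of K₂ in ℝ^m there exists a compact neighborhood Ψ of K₁ in ℝ^m with Ψ contained in the interior of Φ, such that for every v ∈ ℝ^m and every interval [a,b] ⊆ [T₀,∞) satisfying ψ(t)v ∈ Φ for all t ∈ [a,b] and ψ(b)v ∈ Φ∖int(Φ), one has |{t ∈ [a,b] : ψ(t)v ∈ Ψ}| ≤ ε·(b−a). -/
open Set MeasureTheory Filter Topology

/-- The Euclidean norm on `ℝ^m`. -/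
noncomputable def euclNorm {m : ℕ} (x : Fin m → ℝ) : ℝ :=
  Real.sqrt (∑ i, x i ^ 2)

/-!
Let `r` bound the norm on `K₁`, pick `ρ ∈ (0,1)` with `C ρ^α ≤ ε`, and take
`K₂ = K₁ ∪ (V ∩ {‖x‖ ≤ r/ρ})`. Given `Φ`, the polynomial `|Q|` is at least some `δ > 0` on the
compact set `(Φ \ int Φ) ∩ {‖x‖ ≤ r/ρ}`, which misses `V` as `K₂ ⊆ int Φ`; take for `Ψ` a
compact neighbourhood of `K₁` inside `int Φ ∩ {|Q| < δρ} ∩ {‖x‖ < r}`. A trajectory leaving `Φ`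
at time `b` either has `‖ψ(b)v‖ > r/ρ`, and then the goodness (a) of the norm bounds the time it
spends in `{‖x‖ ≤ r}`, or has `|Q(ψ(b)v)| ≥ δ`. In the second case every time `t` with
`|Q(ψ(t)v)| ≤ δρ` is followed by one of the finitely many (by (c)) times `y` with
`|Q(ψ(y)v)| = δ`, and lies in an interval ending at `y` on which `|Q(ψ(·)v)|` is maximal at `y`;
these intervals are disjoint, and (b) bounds the sublevel time in each of them.
-/

section euclNorm

variable {m : ℕ}

lemma euclNorm_eq_norm_toLp (x : Fin m → ℝ) :
    euclNorm x = ‖WithLp.toLp 2 x‖ := by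
  simp [euclNorm, EuclideanSpace.norm_eq]

lemma euclNorm_nonneg (x : Fin m → ℝ) : 0 ≤ euclNorm x := Real.sqrt_nonneg _

lemma continuous_euclNorm : Continuous (euclNorm (m := m)) :=
  (continuous_norm.comp (PiLp.continuous_toLp 2 _)).congr fun x => (euclNorm_eq_norm_toLp x).symm

lemma isCompact_setOf_euclNorm_le (R : ℝ) :
    IsCompact {x : Fin m → ℝ | euclNorm x ≤ R} := by
  have : {x : Fin m → ℝ | euclNorm x ≤ R} = WithLp.toLp 2 ⁻¹' Metric.closedBall 0 R := by
    ext x; simp [euclNorm_eq_norm_toLp]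
  rw [this]
  exact (PiLp.homeomorph 2 _).symm.isCompact_preimage.2 (isCompact_closedBall 0 R)

lemma IsCompact.exists_pos_forall_euclNorm_lt {K : Set (Fin m → ℝ)} (hK : IsCompact K) :
    ∃ r, 0 < r ∧ ∀ x ∈ K, euclNorm x < r := by
  obtain ⟨r₀, hr₀⟩ := hK.bddAbove_image continuous_euclNorm.continuousOn
  exact ⟨max r₀ 0 + 1, by positivity, fun x hx =>
    (hr₀ (mem_image_of_mem _ hx)).trans_lt ((le_max_left r₀ 0).trans_lt (lt_add_one _))⟩

end euclNorm

lemma exists_pos_lt_one_mul_rpow_le (C : ℝ) {α ε : ℝ} (hα : 0 < α) (hε : 0 < ε) :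
    ∃ ρ, 0 < ρ ∧ ρ < 1 ∧ C * ρ ^ α ≤ ε := by
  have hlim : Tendsto (fun ρ : ℝ => C * ρ ^ α) (𝓝[>] 0) (𝓝 0) := by
    have := ((Real.continuous_rpow_const hα.le).tendsto 0).const_mul C
    simpa [Real.zero_rpow hα.ne'] using this.mono_left nhdsWithin_le_nhds
  obtain ⟨ρ, hρε, hρ⟩ := ((hlim.eventually (ge_mem_nhds hε)).and (Ioo_mem_nhdsGT one_pos)).exists
  exact ⟨ρ, hρ.1, hρ.2, hρε⟩

lemma IsCAlphaGood.volume_abs_le_le {C α T₀ a b r R : ℝ} {g : ℝ → ℝ}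
    (hg : IsCAlphaGood C α T₀ g) (hC : 0 ≤ C) (hα : 0 ≤ α) (hT₀a : T₀ ≤ a) (hab : a ≤ b)
    (hcont : ContinuousOn g (Icc a b)) (hr : 0 < r) (hR : 0 < R) (hRb : R < |g b|) :
    volume {t ∈ Icc a b | |g t| ≤ r} ≤ ENNReal.ofReal (C * (r / R) ^ α * (b - a)) := by
  have hRS : R < sSup ((fun t => |g t|) '' Icc a b) :=
    hRb.trans_le <| le_csSup (isCompact_Icc.image_of_continuousOn hcont.abs).bddAbove
      (mem_image_of_mem _ ⟨hab, le_rfl⟩)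
  refine (hg a b hT₀a hab (hR.trans hRS) r hr).trans (ENNReal.ofReal_le_ofReal ?_)
  have := sub_nonneg.2 hab
  have := div_nonneg hr.le (hR.trans hRS).le
  gcongr

lemma ContinuousOn.forall_Icc_le_of_forall_Ioo_le {g : ℝ → ℝ} {x y c : ℝ}
    (hg : ContinuousOn g (Icc x y)) (hxy : x < y) (h : ∀ u ∈ Ioo x y, g u ≤ c) :
    ∀ u ∈ Icc x y, g u ≤ c := by
  have : g '' Icc x y ⊆ Iic c := by
    rw [← closure_Ioo hxy.ne] at hg ⊢
    exact hg.image_closure.trans (closure_minimal (image_subset_iff.2 h) isClosed_Iic)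
  exact fun u hu => this (mem_image_of_mem g hu)

lemma exists_first_eq_of_lt_of_le {g : ℝ → ℝ} {t b δ : ℝ} (hg : ContinuousOn g (Icc t b))
    (htb : t ≤ b) (ht : g t < δ) (hb : δ ≤ g b) :
    ∃ y ∈ Ioc t b, g y = δ ∧ ∀ u ∈ Ico t y, g u < δ := by
  set S := {u ∈ Icc t b | δ ≤ g u}
  have hS : IsClosed S := hg.preimage_isClosed_of_isClosed isClosed_Icc isClosed_Ici
  have hSbdd : BddBelow S := ⟨t, fun u hu => hu.1.1⟩
  have hyS : sInf S ∈ S := hS.csInf_mem ⟨b, ⟨htb, le_rfl⟩, hb⟩ hSbdd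
  have hbelow : ∀ u ∈ Ico t (sInf S), g u < δ := fun u hu => not_le.1 fun h =>
    (csInf_le hSbdd ⟨⟨hu.1, hu.2.le.trans hyS.1.2⟩, h⟩).not_gt hu.2
  have hty : t < sInf S := hyS.1.1.lt_of_ne fun h => ht.not_ge (h ▸ hyS.2)
  refine ⟨sInf S, ⟨hty, hyS.1.2⟩, le_antisymm ?_ hyS.2, hbelow⟩
  exact (hg.mono (Icc_subset_Icc_right hyS.1.2)).forall_Icc_le_of_forall_Ioo_le hty
    (fun u hu => (hbelow u ⟨hu.1.le, hu.2⟩).le) _ ⟨hty.le, le_rfl⟩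

noncomputable def lastTimeAbove (g : ℝ → ℝ) (δ a y : ℝ) : ℝ :=
  sSup (insert a {u ∈ Ico a y | δ ≤ g u})

section lastTimeAbove

variable {g : ℝ → ℝ} {δ a y : ℝ}

lemma isLUB_lastTimeAbove (hay : a ≤ y) :
    IsLUB (insert a {u ∈ Ico a y | δ ≤ g u}) (lastTimeAbove g δ a y) :=
  isLUB_csSup (insert_nonempty _ _) ⟨y, by rintro u (rfl | ⟨hu, -⟩); exacts [hay, hu.2.le]⟩

lemma le_lastTimeAbove (hay : a ≤ y) : a ≤ lastTimeAbove g δ a y :=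
  (isLUB_lastTimeAbove hay).1 (mem_insert _ _)

lemma le_lastTimeAbove_of_le {u : ℝ} (hu : u ∈ Ico a y) (h : δ ≤ g u) :
    u ≤ lastTimeAbove g δ a y :=
  (isLUB_lastTimeAbove (hu.1.trans hu.2.le)).1 (mem_insert_of_mem _ ⟨hu, h⟩)

lemma lastTimeAbove_le_of_forall_lt {t : ℝ} (hat : a ≤ t) (hty : t ≤ y)
    (h : ∀ u ∈ Ico t y, g u < δ) : lastTimeAbove g δ a y ≤ t := by
  refine (isLUB_lastTimeAbove (hat.trans hty)).2 ?_
  rintro u (rfl | ⟨hu, hgu⟩)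
  · exact hat
  · exact not_lt.1 fun htu => (h u ⟨htu.le, hu.2⟩).not_ge hgu

lemma lastTimeAbove_le (hay : a ≤ y) : lastTimeAbove g δ a y ≤ y :=
  lastTimeAbove_le_of_forall_lt hay le_rfl fun _ hu => absurd hu.2 hu.1.not_gt

lemma lt_of_lastTimeAbove_lt {u : ℝ} (hay : a ≤ y) (hu : lastTimeAbove g δ a y < u)
    (huy : u < y) : g u < δ :=
  not_le.1 fun h => hu.not_ge <|
    le_lastTimeAbove_of_le ⟨(le_lastTimeAbove hay).trans hu.le, huy⟩ h

lemma le_of_mem_Icc_lastTimeAbove (hg : ContinuousOn g (Icc a y)) (hay : a ≤ y)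
    (hy : g y = δ) : ∀ u ∈ Icc (lastTimeAbove g δ a y) y, g u ≤ g y := by
  rcases (lastTimeAbove_le hay).lt_or_eq with hlt | heq
  · exact (hg.mono (Icc_subset_Icc_left (le_lastTimeAbove hay))).forall_Icc_le_of_forall_Ioo_le
      hlt fun u hu => hy ▸ (lt_of_lastTimeAbove_lt hay hu.1 hu.2).le
  · rw [heq, Icc_self]
    rintro u rfl
    exact le_rfl

end lastTimeAbove

theorem volume_sublevel_le_of_forall_rightMax {g : ℝ → ℝ} {a b δ η κ : ℝ}
    (hg : ContinuousOn g (Icc a b)) (hκ : 0 ≤ κ) (hηδ : η < δ) (hb : δ ≤ g b)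
    (hfin : {t ∈ Icc a b | g t = δ}.Finite)
    (hmax : ∀ x y, a ≤ x → x ≤ y → y ≤ b → (∀ u ∈ Icc x y, g u ≤ g y) → g y = δ →
      volume {u ∈ Icc x y | g u ≤ η} ≤ ENNReal.ofReal (κ * (y - x))) :
    volume {t ∈ Icc a b | g t ≤ η} ≤ ENNReal.ofReal (κ * (b - a)) := by
  set F := hfin.toFinset
  set X := lastTimeAbove g δ a
  have hF : ∀ y ∈ F, y ∈ Icc a b ∧ g y = δ := fun y hy => hfin.mem_toFinset.1 hy
  have hcover : {t ∈ Icc a b | g t ≤ η} ⊆ ⋃ y ∈ F, {u ∈ Icc (X y) y | g u ≤ η} := by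
    rintro t ⟨ht, hgt⟩
    obtain ⟨y, ⟨hty, hyb⟩, hgy, hbelow⟩ :=
      exists_first_eq_of_lt_of_le (hg.mono (Icc_subset_Icc_left ht.1)) ht.2 (hgt.trans_lt hηδ) hb
    refine mem_biUnion (hfin.mem_toFinset.2 ⟨⟨ht.1.trans hty.le, hyb⟩, hgy⟩) ⟨⟨?_, hty.le⟩, hgt⟩
    exact lastTimeAbove_le_of_forall_lt ht.1 hty.le hbelow
  have hdisj : (F : Set ℝ).PairwiseDisjoint fun y => Ioo (X y) y := by
    have key : ∀ y ∈ F, ∀ y' ∈ F, y < y' → Disjoint (Ioo (X y) y) (Ioo (X y') y') :=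
      fun y hy y' _ hlt => Set.disjoint_left.2 fun z hz hz' => lt_irrefl z <|
        (hz.2.trans_le (le_lastTimeAbove_of_le ⟨(hF y hy).1.1, hlt⟩ (hF y hy).2.ge)).trans hz'.1
    intro y hy y' hy' hne
    rcases hne.lt_or_gt with hlt | hlt
    exacts [key y hy y' hy' hlt, (key y' hy' y hy hlt).symm]
  have hpiece : ∀ y ∈ F, volume {u ∈ Icc (X y) y | g u ≤ η} ≤
      ENNReal.ofReal κ * volume (Ioo (X y) y) := fun y hy => by
    obtain ⟨⟨hay, hyb⟩, hgy⟩ := hF y hy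
    rw [Real.volume_Ioo, ← ENNReal.ofReal_mul hκ]
    exact hmax _ _ (le_lastTimeAbove hay) (lastTimeAbove_le hay) hyb
      (le_of_mem_Icc_lastTimeAbove (hg.mono (Icc_subset_Icc_right hyb)) hay hgy) hgy
  calc volume {t ∈ Icc a b | g t ≤ η}
      ≤ ∑ y ∈ F, volume {u ∈ Icc (X y) y | g u ≤ η} :=
        (measure_mono hcover).trans (measure_biUnion_finset_le F _)
    _ ≤ ∑ y ∈ F, ENNReal.ofReal κ * volume (Ioo (X y) y) := Finset.sum_le_sum hpiece
    _ = ENNReal.ofReal κ * volume (⋃ y ∈ F, Ioo (X y) y) := by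
        rw [measure_biUnion_finset hdisj fun _ _ => measurableSet_Ioo, Finset.mul_sum]
    _ ≤ ENNReal.ofReal κ * volume (Icc a b) := by
        gcongr
        exact iUnion₂_subset fun y hy => Ioo_subset_Icc_self.trans <|
          Icc_subset_Icc (le_lastTimeAbove (hF y hy).1.1) (hF y hy).1.2
    _ = ENNReal.ofReal (κ * (b - a)) := by rw [Real.volume_Icc, ← ENNReal.ofReal_mul hκ]

def IsRightMaxGood (C α T₀ : ℝ) (g : ℝ → ℝ) : Prop :=
  ∀ x y : ℝ, T₀ ≤ x → x ≤ y → (∀ t ∈ Icc x y, g t ≤ g y) → 0 < g y →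
    ∀ η : ℝ, 0 < η →
      volume {t ∈ Icc x y | g t ≤ η} ≤ ENNReal.ofReal (C * (η / g y) ^ α * (y - x))

lemma IsRightMaxGood.volume_le_mul_le {C α T₀ a b δ ρ : ℝ} {g : ℝ → ℝ}
    (hg : IsRightMaxGood C α T₀ g) (hcont : ContinuousOn g (Icc a b)) (hC : 0 ≤ C)
    (hT₀a : T₀ ≤ a) (hδ : 0 < δ) (hρ : 0 < ρ) (hρ1 : ρ < 1) (hb : δ ≤ g b)
    (hfin : {t ∈ Icc a b | g t = δ}.Finite) :
    volume {t ∈ Icc a b | g t ≤ δ * ρ} ≤ ENNReal.ofReal (C * ρ ^ α * (b - a)) := by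
  refine volume_sublevel_le_of_forall_rightMax hcont (by positivity)
    (mul_lt_of_lt_one_right hδ hρ1) hb hfin fun x y hax hxy _ hmax hy => ?_
  have := hg x y (hT₀a.trans hax) hxy hmax (hy ▸ hδ) (δ * ρ) (by positivity)
  rwa [hy, mul_div_cancel_left₀ _ hδ.ne'] at this

theorem volume_sublevel_inter_le {C α T₀ a b δ ρ r : ℝ} {g h : ℝ → ℝ}
    (hh : IsCAlphaGood C α T₀ h) (hg : IsRightMaxGood C α T₀ g) (hC : 0 ≤ C) (hα : 0 ≤ α)
    (hT₀a : T₀ ≤ a) (hab : a ≤ b) (hhcont : ContinuousOn h (Icc a b))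
    (hgcont : ContinuousOn g (Icc a b)) (hδ : 0 < δ) (hρ : 0 < ρ) (hρ1 : ρ < 1) (hr : 0 < r)
    (hend : |h b| ≤ r / ρ → δ ≤ g b) (hfin : {t ∈ Icc a b | g t = δ}.Finite) :
    volume {t ∈ Icc a b | g t ≤ δ * ρ ∧ |h t| ≤ r} ≤ ENNReal.ofReal (C * ρ ^ α * (b - a)) := by
  by_cases hsmall : |h b| ≤ r / ρ
  · refine le_trans (measure_mono ?_)
      (hg.volume_le_mul_le hgcont hC hT₀a hδ hρ hρ1 (hend hsmall) hfin)
    exact fun t ht => ⟨ht.1, ht.2.1⟩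
  · have := hh.volume_abs_le_le hC hα hT₀a hab hhcont hr (by positivity) (not_le.1 hsmall)
    rw [div_div_cancel₀ hr.ne'] at this
    refine le_trans (measure_mono ?_) this
    exact fun t ht => ⟨ht.1, ht.2.2⟩

theorem relative_time_near_varieties_general
    (m : ℕ)
    (ψ : ℝ → Matrix (Fin m) (Fin m) ℝ)
    (hψcont : ContinuousOn ψ (Ici (0:ℝ)))
    (Q : MvPolynomial (Fin m) ℝ)
    (T₀ C α : ℝ) (hT₀ : 0 < T₀) (hC : 0 < C) (hα : 0 < α)
    -- (a) the norm maps `t ↦ ‖ψ(t)v‖` are `(C,α)`-good on `[T₀,∞)`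
    (ha : ∀ v : Fin m → ℝ,
      IsCAlphaGood C α T₀ (fun t => euclNorm ((ψ t).mulVec v)))
    -- (b) the maps `t ↦ |Q(ψ(t)v)|` are right-max-`(C,α)`-good on `[T₀,∞)`
    (hb : ∀ v : Fin m → ℝ, ∀ x y : ℝ, T₀ ≤ x → x ≤ y →
      (∀ t ∈ Icc x y,
        |MvPolynomial.eval ((ψ t).mulVec v) Q| ≤ |MvPolynomial.eval ((ψ y).mulVec v) Q|) →
      0 < |MvPolynomial.eval ((ψ y).mulVec v) Q| →
      ∀ η : ℝ, 0 < η →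
        volume {t ∈ Icc x y | |MvPolynomial.eval ((ψ t).mulVec v) Q| ≤ η} ≤
          ENNReal.ofReal
            (C * (η / |MvPolynomial.eval ((ψ y).mulVec v) Q|) ^ α * (y - x)))
    -- (c) each positive value is attained only finitely often on bounded intervals
    (hc : ∀ v : Fin m → ℝ, ∀ c : ℝ, 0 < c → ∀ a b : ℝ, T₀ ≤ a → a ≤ b →
      {t ∈ Icc a b | |MvPolynomial.eval ((ψ t).mulVec v) Q| = c}.Finite) :
    ∀ ε : ℝ, 0 < ε →
      ∀ K₁ : Set (Fin m → ℝ), IsCompact K₁ →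
        K₁ ⊆ {x | MvPolynomial.eval x Q = 0} →
        ∃ K₂ : Set (Fin m → ℝ), IsCompact K₂ ∧ K₁ ⊆ K₂ ∧
          K₂ ⊆ {x | MvPolynomial.eval x Q = 0} ∧
          ∀ Φ : Set (Fin m → ℝ), IsCompact Φ → K₂ ⊆ interior Φ →
            ∃ Ψ : Set (Fin m → ℝ), IsCompact Ψ ∧ K₁ ⊆ interior Ψ ∧ Ψ ⊆ interior Φ ∧
              ∀ v : Fin m → ℝ, ∀ a b : ℝ, T₀ ≤ a → a ≤ b →
                (∀ t ∈ Icc a b, (ψ t).mulVec v ∈ Φ) →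
                (ψ b).mulVec v ∈ Φ \ interior Φ →
                volume {t ∈ Icc a b | (ψ t).mulVec v ∈ Ψ} ≤
                  ENNReal.ofReal (ε * (b - a)) := by
  intro ε hε K₁ hK₁ hK₁V
  have hQ : Continuous fun x : Fin m → ℝ => |MvPolynomial.eval x Q| :=
    (MvPolynomial.continuous_eval Q).abs
  obtain ⟨ρ, hρ0, hρ1, hρε⟩ := exists_pos_lt_one_mul_rpow_le C hα hε
  obtain ⟨r, hr, hK₁r⟩ := hK₁.exists_pos_forall_euclNorm_lt
  refine ⟨K₁ ∪ ({x | MvPolynomial.eval x Q = 0} ∩ {x | euclNorm x ≤ r / ρ}),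
    hK₁.union ((isCompact_setOf_euclNorm_le _).inter_left
      (isClosed_eq (MvPolynomial.continuous_eval Q) continuous_const)),
    subset_union_left, union_subset hK₁V inter_subset_left, fun Φ hΦ hK₂Φ => ?_⟩
  obtain ⟨δ, hδ0, hδ⟩ := ((isCompact_setOf_euclNorm_le (r / ρ)).inter_left
    (hΦ.isClosed.sdiff isOpen_interior)).exists_forall_le' hQ.continuousOn
    fun x hx => abs_pos.2 fun h0 => hx.1.2 (hK₂Φ (Or.inr ⟨h0, hx.2⟩))
  have hK₁U : K₁ ⊆ interior Φ ∩ {x | |MvPolynomial.eval x Q| < δ * ρ} ∩ {x | euclNorm x < r} :=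
    fun x hx => ⟨⟨hK₂Φ (Or.inl hx), by
      rw [mem_ofPred_eq, show MvPolynomial.eval x Q = 0 from hK₁V hx, abs_zero]; positivity⟩,
      hK₁r x hx⟩
  obtain ⟨Ψ, hΨ, hK₁Ψ, hΨU⟩ := exists_compact_between hK₁
    ((isOpen_interior.inter (isOpen_lt hQ continuous_const)).inter
      (isOpen_lt continuous_euclNorm continuous_const)) hK₁U
  refine ⟨Ψ, hΨ, hK₁Ψ, fun x hx => (hΨU hx).1.1, fun v a b hT₀a hab _ hbΦ => ?_⟩
  have hp : ContinuousOn (fun t => (ψ t).mulVec v) (Icc a b) :=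
    ((continuous_id.matrix_mulVec continuous_const).comp_continuousOn hψcont).mono
      fun t ht => hT₀.le.trans (hT₀a.trans ht.1)
  calc volume {t ∈ Icc a b | (ψ t).mulVec v ∈ Ψ}
      ≤ volume {t ∈ Icc a b | |MvPolynomial.eval ((ψ t).mulVec v) Q| ≤ δ * ρ ∧
          |euclNorm ((ψ t).mulVec v)| ≤ r} :=
        measure_mono fun t ht => ⟨ht.1, (hΨU ht.2).1.2.le,
          (abs_of_nonneg (euclNorm_nonneg _)).trans_le (hΨU ht.2).2.le⟩
    _ ≤ ENNReal.ofReal (C * ρ ^ α * (b - a)) :=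
        volume_sublevel_inter_le (ha v) (hb v) hC.le hα.le hT₀a hab
          (continuous_euclNorm.comp_continuousOn hp) (hQ.comp_continuousOn hp) hδ0 hρ0 hρ1 hr
          (fun hsmall => hδ _ ⟨hbΦ, (le_abs_self _).trans hsmall⟩) (hc v δ hδ0 a b hT₀a hab)
    _ ≤ ENNReal.ofReal (ε * (b - a)) :=
        ENNReal.ofReal_le_ofReal (mul_le_mul_of_nonneg_right hρε (sub_nonneg.2 hab))

/-- (Relative time near algebraic varieties.) Let `ψ : [0,∞) → GL(m,ℝ)` be
continuous, `Q` a nonzero polynomial on `ℝ^m` and `V = {Q = 0}`. Under the `(C,α)`-good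
hypotheses (a), (b) and the finite-level-set hypothesis (c), for every `ε > 0` and compact
`K₁ ⊆ V` there is a compact `K₂` with `K₁ ⊆ K₂ ⊆ V` such that for every compact
neighborhood `Φ` of `K₂` there is a compact neighborhood `Ψ` of `K₁` inside the interior
of `Φ` such that for every `v ∈ ℝ^m` and interval `[a,b] ⊆ [T₀,∞)` with `ψ(t)v ∈ Φ` on
`[a,b]` and `ψ(b)v ∈ Φ∖int(Φ)`, one has `|{t ∈ [a,b] : ψ(t)v ∈ Ψ}| ≤ ε·(b−a)`. -/
theorem relative_time_near_varieties
    (m : ℕ) (hm : 1 ≤ m)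
    (ψ : ℝ → Matrix (Fin m) (Fin m) ℝ)
    (hψcont : ContinuousOn ψ (Ici (0:ℝ)))
    (hψinv : ∀ t : ℝ, 0 ≤ t → IsUnit (ψ t))
    (Q : MvPolynomial (Fin m) ℝ) (hQ : Q ≠ 0)
    (T₀ C α : ℝ) (hT₀ : 0 < T₀) (hC : 0 < C) (hα : 0 < α)
    -- (a) the norm maps `t ↦ ‖ψ(t)v‖` are `(C,α)`-good on `[T₀,∞)`
    (ha : ∀ v : Fin m → ℝ,
      IsCAlphaGood C α T₀ (fun t => euclNorm ((ψ t).mulVec v)))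
    -- (b) the maps `t ↦ |Q(ψ(t)v)|` are right-max-`(C,α)`-good on `[T₀,∞)`
    (hb : ∀ v : Fin m → ℝ, ∀ x y : ℝ, T₀ ≤ x → x ≤ y →
      (∀ t ∈ Icc x y,
        |MvPolynomial.eval ((ψ t).mulVec v) Q| ≤ |MvPolynomial.eval ((ψ y).mulVec v) Q|) →
      0 < |MvPolynomial.eval ((ψ y).mulVec v) Q| →
      ∀ η : ℝ, 0 < η →
        volume {t ∈ Icc x y | |MvPolynomial.eval ((ψ t).mulVec v) Q| ≤ η} ≤
          ENNReal.ofReal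
            (C * (η / |MvPolynomial.eval ((ψ y).mulVec v) Q|) ^ α * (y - x)))
    -- (c) each positive value is attained only finitely often on bounded intervals
    (hc : ∀ v : Fin m → ℝ, ∀ c : ℝ, 0 < c → ∀ a b : ℝ, T₀ ≤ a → a ≤ b →
      {t ∈ Icc a b | |MvPolynomial.eval ((ψ t).mulVec v) Q| = c}.Finite) :
    ∀ ε : ℝ, 0 < ε →
      ∀ K₁ : Set (Fin m → ℝ), IsCompact K₁ →
        K₁ ⊆ {x | MvPolynomial.eval x Q = 0} →
        ∃ K₂ : Set (Fin m → ℝ), IsCompact K₂ ∧ K₁ ⊆ K₂ ∧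
          K₂ ⊆ {x | MvPolynomial.eval x Q = 0} ∧
          ∀ Φ : Set (Fin m → ℝ), IsCompact Φ → K₂ ⊆ interior Φ →
            ∃ Ψ : Set (Fin m → ℝ), IsCompact Ψ ∧ K₁ ⊆ interior Ψ ∧ Ψ ⊆ interior Φ ∧
              ∀ v : Fin m → ℝ, ∀ a b : ℝ, T₀ ≤ a → a ≤ b →
                (∀ t ∈ Icc a b, (ψ t).mulVec v ∈ Φ) →
                (ψ b).mulVec v ∈ Φ \ interior Φ →
                volume {t ∈ Icc a b | (ψ t).mulVec v ∈ Ψ} ≤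
                  ENNReal.ofReal (ε * (b - a)) :=
  relative_time_near_varieties_general m ψ hψcont Q T₀ C α hT₀ hC hα ha hb hc
end
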